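/- arXiv:2111.14215 — 7 statements merged into one kernel-verified Lean document; each statement's English description precedes it below -/
import Mathlib

section
/- Let u ∈ W^{2,1}(0,1) solve -(u'/√(1+(u')²))' = λ a(x) f(u) a.e. with u'(0)=u'(1)=0, where f is continuous and bounded with ‖f‖_∞ = sup_{u≥0} f(u) < ∞ and a ∈ L¹(0,1). Then ‖u'‖_{L^∞(0,1)} ≤ ψ(λ ‖f‖_∞ ‖a‖_{L¹}) whenever λ‖f‖_∞‖a‖_{L¹} < 1, where ψ(s) = s/√(1-s²); in particular the quantity |u'(x)|/√(1+(u'(x))²) is bounded by λ‖f‖_∞‖a‖_{L¹} for all x. -/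
open Filter Set MeasureTheory

lemma stmt6_inv (S v : ℝ) (hS : 0 ≤ S) (hS1 : S < 1)
    (h : |v| / Real.sqrt (1 + v ^ 2) ≤ S) :
    |v| ≤ S / Real.sqrt (1 - S ^ 2) := by
  have h1 : (0:ℝ) < 1 - S ^ 2 := by nlinarith
  have hs0 : (0:ℝ) < Real.sqrt (1 + v ^ 2) := Real.sqrt_pos.2 (by positivity)
  have hv : |v| ≤ S * Real.sqrt (1 + v ^ 2) := by
    rwa [div_le_iff₀ hs0] at h
  have hsq : (Real.sqrt (1 + v ^ 2)) ^ 2 = 1 + v ^ 2 := Real.sq_sqrt (by positivity)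
  have hv2 : v ^ 2 ≤ S ^ 2 * (1 + v ^ 2) := by
    nlinarith [sq_abs v, abs_nonneg v, Real.sqrt_nonneg (1 + v ^ 2)]
  have hv3 : v ^ 2 ≤ S ^ 2 / (1 - S ^ 2) := by
    rw [le_div_iff₀ h1]; nlinarith
  have hq : (Real.sqrt (1 - S ^ 2)) ^ 2 = 1 - S ^ 2 := Real.sq_sqrt h1.le
  have hR : 0 ≤ S / Real.sqrt (1 - S ^ 2) := by positivity
  calc |v| = Real.sqrt (v ^ 2) := (Real.sqrt_sq_eq_abs v).symm
    _ ≤ Real.sqrt ((S / Real.sqrt (1 - S ^ 2)) ^ 2) := by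
        apply Real.sqrt_le_sqrt
        rw [div_pow, hq]
        exact hv3
    _ = S / Real.sqrt (1 - S ^ 2) := Real.sqrt_sq hR

theorem stmt6 (a f : ℝ → ℝ) (lam Bf : ℝ) (u u' : ℝ → ℝ)
    (ha : IntegrableOn a (Ioo 0 1) volume) (hf : Continuous f)
    (hfb : ∀ s, 0 ≤ s → 0 ≤ f s ∧ f s ≤ Bf)
    (hu0 : ∀ x ∈ Icc (0:ℝ) 1, 0 ≤ u x)
    (hlam : 0 ≤ lam)
    (hderiv : ∀ x ∈ Icc (0:ℝ) 1, HasDerivAt u (u' x) x)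
    (hFTC : ∀ x ∈ Icc (0:ℝ) 1,
      u' x / Real.sqrt (1 + (u' x) ^ 2)
        = u' 0 / Real.sqrt (1 + (u' 0) ^ 2) - lam * ∫ t in (0:ℝ)..x, a t * f (u t))
    (hbc0 : u' 0 = 0) (hbc1 : u' 1 = 0)
    (hsmall : lam * Bf * (∫ t in (0:ℝ)..1, |a t|) < 1) :
    (∀ x ∈ Icc (0:ℝ) 1,
      |u' x| ≤ (lam * Bf * ∫ t in (0:ℝ)..1, |a t|) /
        Real.sqrt (1 - (lam * Bf * ∫ t in (0:ℝ)..1, |a t|) ^ 2)) ∧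
    (∀ x ∈ Icc (0:ℝ) 1,
      |u' x| / Real.sqrt (1 + (u' x) ^ 2) ≤ lam * Bf * ∫ t in (0:ℝ)..1, |a t|) := by
  have hBf : 0 ≤ Bf := le_trans (hfb 0 le_rfl).1 (hfb 0 le_rfl).2
  have hIa : 0 ≤ ∫ t in (0:ℝ)..1, |a t| :=
    intervalIntegral.integral_nonneg (by norm_num) (fun t _ => abs_nonneg _)
  have hS0 : 0 ≤ lam * Bf * ∫ t in (0:ℝ)..1, |a t| := by positivity
  -- integrability
  have haI : IntegrableOn a (Icc 0 1) volume :=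
    (integrableOn_Icc_iff_integrableOn_Ioo).2 ha
  have hu_cont : ContinuousOn u (Icc 0 1) :=
    fun x hx => (hderiv x hx).continuousAt.continuousWithinAt
  have hfu_cont : ContinuousOn (fun t => f (u t)) (Icc (0:ℝ) 1) :=
    hf.comp_continuousOn hu_cont
  have hgI : IntegrableOn (fun t => a t * f (u t)) (Icc 0 1) volume :=
    haI.mul_continuousOn hfu_cont isCompact_Icc
  have habsI : IntegrableOn (fun t => |a t|) (Icc (0:ℝ) 1) volume := haI.abs
  -- main bound on the integral
  have key : ∀ x ∈ Icc (0:ℝ) 1,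
      |∫ t in (0:ℝ)..x, a t * f (u t)| ≤ Bf * ∫ t in (0:ℝ)..1, |a t| := by
    intro x hx
    obtain ⟨hx0, hx1⟩ := hx
    have hsub : Icc (0:ℝ) x ⊆ Icc 0 1 := Icc_subset_Icc le_rfl hx1
    have hgint : IntervalIntegrable (fun t => a t * f (u t)) volume 0 x := by
      have := hgI.mono_set hsub
      rw [← uIcc_of_le hx0] at this
      exact this.intervalIntegrable
    have hgabsint : IntervalIntegrable (fun t => |a t * f (u t)|) volume 0 x := hgint.abs
    have haint : ∀ y z : ℝ, 0 ≤ y → y ≤ z → z ≤ 1 →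
        IntervalIntegrable (fun t => |a t|) volume y z := by
      intro y z hy hyz hz
      have := habsI.mono_set (Icc_subset_Icc hy hz)
      rw [← uIcc_of_le hyz] at this
      exact this.intervalIntegrable
    have hBaint : IntervalIntegrable (fun t => Bf * |a t|) volume 0 x :=
      (haint 0 x le_rfl hx0 hx1).const_mul Bf
    calc |∫ t in (0:ℝ)..x, a t * f (u t)|
        ≤ ∫ t in (0:ℝ)..x, |a t * f (u t)| :=
          intervalIntegral.abs_integral_le_integral_abs hx0
      _ ≤ ∫ t in (0:ℝ)..x, Bf * |a t| := by
          apply intervalIntegral.integral_mono_on hx0 hgabsint hBaint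
          intro t ht
          have ht' : t ∈ Icc (0:ℝ) 1 := hsub ht
          have hut : 0 ≤ u t := hu0 t ht'
          have hft := hfb (u t) hut
          rw [abs_mul, abs_of_nonneg hft.1, mul_comm Bf]
          exact mul_le_mul_of_nonneg_left hft.2 (abs_nonneg _)
      _ = Bf * ∫ t in (0:ℝ)..x, |a t| := intervalIntegral.integral_const_mul _ _
      _ ≤ Bf * ∫ t in (0:ℝ)..1, |a t| := by
          apply mul_le_mul_of_nonneg_left _ hBf
          have hsplit : (∫ t in (0:ℝ)..x, |a t|) + (∫ t in x..1, |a t|)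
              = ∫ t in (0:ℝ)..1, |a t| :=
            intervalIntegral.integral_add_adjacent_intervals
              (haint 0 x le_rfl hx0 hx1) (haint x 1 hx0 hx1 le_rfl)
          have hnn : 0 ≤ ∫ t in x..1, |a t| :=
            intervalIntegral.integral_nonneg hx1 (fun t _ => abs_nonneg _)
          linarith
  -- second conclusion
  have part2 : ∀ x ∈ Icc (0:ℝ) 1,
      |u' x| / Real.sqrt (1 + (u' x) ^ 2) ≤ lam * Bf * ∫ t in (0:ℝ)..1, |a t| := by
    intro x hx
    have hftc := hFTC x hx
    rw [hbc0] at hftc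
    simp only [zero_div, zero_sub] at hftc
    have hpos : (0:ℝ) < Real.sqrt (1 + (u' x) ^ 2) := Real.sqrt_pos.2 (by positivity)
    have : |u' x| / Real.sqrt (1 + (u' x) ^ 2)
        = |u' x / Real.sqrt (1 + (u' x) ^ 2)| := by
      rw [abs_div, abs_of_pos hpos]
    rw [this, hftc, abs_neg, abs_mul, abs_of_nonneg hlam, mul_assoc]
    exact mul_le_mul_of_nonneg_left (key x hx) hlam
  refine ⟨fun x hx => stmt6_inv _ _ hS0 hsmall (part2 x hx), part2⟩
end

section
/- Let h ∈ L¹(0,1), z ∈ (0,1), δ₁, δ₂ > 0 with h ≥ 0 a.e. on (z-δ₁, z) and h ≤ 0 a.e. on (z, z+δ₂). Suppose u ∈ W^{1,1}(z-δ₁, z) ∩ W^{2,1}_loc(z-δ₁, z) satisfies -(u'/√(1+(u')²))' = h a.e. in (z-δ₁, z), u is bounded on (z-δ₁, z), and ∫_{z-δ₁}^{z} (∫_x^z h(t) dt)^{-1/2} dx = ∞ (with ∫_x^z h > 0 for x < z near z). Then the left Dini derivative u'(z⁻) is finite, i.e. lim_{x→z⁻} u'(x) > -∞. -/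
/-!
Put `φ = u' / √(1 + u'²) ∈ (-1, 1)` and `I x = ∫ₓᶻ h`. The equation says that `φ - I` is
constant near `z⁻`, and `I → 0`, so `φ` tends to some `c < 1`. If `c > -1`, then
`u' = φ / √(1 - φ²)` converges. Otherwise `φ ≤ -1 + I`, hence `1 - φ² ≤ 2 I`, which forces
`-u' ≥ I^{-1/2} / 2` close to `z`; boundedness of `u` then makes `I^{-1/2}` integrable,
against the divergence hypothesis.
-/

open Real Filter Set MeasureTheory Topology

lemma div_sqrt_one_add_sq_lt_one (p : ℝ) : p / √(1 + p ^ 2) < 1 := by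
  rw [div_lt_one (by positivity)]
  calc p ≤ |p| := le_abs_self p
    _ = √(p ^ 2) := (sqrt_sq_eq_abs p).symm
    _ < √(1 + p ^ 2) := sqrt_lt_sqrt (sq_nonneg p) (by linarith)

lemma div_sqrt_one_sub_sq_div_sqrt_one_add_sq (p : ℝ) :
    p / √(1 + p ^ 2) / √(1 - (p / √(1 + p ^ 2)) ^ 2) = p := by
  rw [← sin_arctan, ← tan_arcsin,
    arcsin_sin (neg_pi_div_two_lt_arctan p).le (arctan_lt_pi_div_two p).le, tan_arctan]

lemma tendsto_of_tendsto_div_sqrt_one_add_sq {α : Type*} {l : Filter α} {f : α → ℝ} {c : ℝ}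
    (hc : c ∈ Ioo (-1) 1) (hf : Tendsto (fun x => f x / √(1 + f x ^ 2)) l (𝓝 c)) :
    Tendsto f l (𝓝 (c / √(1 - c ^ 2))) := by
  have hc2 : 0 < 1 - c ^ 2 := by nlinarith [hc.1, hc.2]
  have hcont : ContinuousAt (fun s : ℝ => s / √(1 - s ^ 2)) c :=
    continuousAt_id.div (by fun_prop) (sqrt_pos.2 hc2).ne'
  simpa only [Function.comp_def, div_sqrt_one_sub_sq_div_sqrt_one_add_sq] using
    hcont.tendsto.comp hf

lemma rpow_neg_half_le_of_div_sqrt_one_add_sq_le {p ε : ℝ} (hε : 0 < ε) (hε4 : ε ≤ 1 / 4)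
    (hp : p / √(1 + p ^ 2) ≤ -1 + ε) : ε ^ (-(1 : ℝ) / 2) ≤ -(2 * p) := by
  set r := √(1 + p ^ 2)
  set s := p / r
  have hr : 0 < r := by positivity
  have hr2 : r ^ 2 = 1 + p ^ 2 := sq_sqrt (by positivity)
  have hsr : s * r = p := div_mul_cancel₀ p hr.ne'
  set q := √ε
  have hq : 0 < q := sqrt_pos.2 hε
  have hq2 : q ^ 2 = ε := sq_sqrt hε.le
  have hs_sq : r ^ 2 * (1 - s ^ 2) = 1 := by rw [← hsr] at hr2; nlinarith
  have hs1 : -1 < s := by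
    have : 0 < 1 - s ^ 2 := pos_of_mul_pos_right (by rw [hs_sq]; exact one_pos) (sq_nonneg r)
    nlinarith
  have hp0 : p < 0 := by rw [← hsr]; nlinarith
  -- `1 - s² = (1 - s)(1 + s) ≤ 2 (1 + s) ≤ 2 ε`
  have h1s : 1 - s ^ 2 ≤ 2 * q ^ 2 := by nlinarith [sq_nonneg (1 + s)]
  have h1r : 1 ≤ 2 * r ^ 2 * q ^ 2 := by nlinarith [mul_le_mul_of_nonneg_left h1s (sq_nonneg r)]
  have hpq : 0 < -(2 * p) * q := by nlinarith
  have hpq_sq : 1 ≤ (-(2 * p) * q) ^ 2 := by nlinarith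
  have hpq_one : 1 ≤ -(2 * p) * q := by nlinarith
  rw [show (-(1 : ℝ) / 2) = -(1 / 2) by ring, rpow_neg hε.le, ← sqrt_eq_rpow,
    inv_le_iff_one_le_mul₀ hq]
  linarith

lemma continuousOn_integral_left {f : ℝ → ℝ} {a b : ℝ} (hf : IntervalIntegrable f volume a b)
    (hab : a ≤ b) : ContinuousOn (fun x => ∫ t in x..b, f t) (Icc a b) := by
  have h := intervalIntegral.continuousOn_primitive_interval' hf right_mem_uIcc
  rw [uIcc_of_le hab] at h
  exact h.neg.congr fun x _ => intervalIntegral.integral_symm b x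

lemma tendsto_integral_left_nhdsLT {f : ℝ → ℝ} {a b : ℝ} (hf : IntervalIntegrable f volume a b)
    (hab : a < b) : Tendsto (fun x => ∫ t in x..b, f t) (𝓝[<] b) (𝓝 0) := by
  simpa only [intervalIntegral.integral_same] using
    ((continuousOn_integral_left hf hab.le b (right_mem_Icc.2 hab.le)).mono_of_mem_nhdsWithin
      (Icc_mem_nhdsLT hab)).tendsto

lemma antitoneOn_integral_left {f : ℝ → ℝ} {a b : ℝ} (hf : IntervalIntegrable f volume a b)
    (hf0 : ∀ᵐ x ∂(volume.restrict (Ioc a b)), 0 ≤ f x) :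
    AntitoneOn (fun x => ∫ t in x..b, f t) (Icc a b) := fun _ hx _ hy hxy =>
  intervalIntegral.integral_mono_interval hxy hy.2 le_rfl
    (ae_restrict_of_ae_restrict_of_subset (Ioc_subset_Ioc_left hx.1) hf0)
    (hf.mono_set (uIcc_subset_uIcc (Icc_subset_uIcc hx) right_mem_uIcc))

lemma integrableOn_Ioc_of_intervalIntegral_le {g : ℝ → ℝ} {a b M : ℝ} (hab : a < b)
    (hg : ContinuousOn g (Ico a b)) (hg0 : ∀ x ∈ Ioo a b, 0 ≤ g x)
    (hM : ∀ d ∈ Ioo a b, ∫ x in a..d, g x ≤ M) : IntegrableOn g (Ioc a b) := by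
  obtain ⟨d, -, hd, hd_lim⟩ := exists_seq_strictMono_tendsto' hab
  have hsub : ∀ n, Icc a (d n) ⊆ Ico a b := fun n => Icc_subset_Ico_right (hd n).2
  refine integrableOn_Ioc_of_intervalIntegral_norm_bounded_right (I := M)
    (fun n => ((hg.mono (hsub n)).integrableOn_Icc).mono_set Ioc_subset_Icc_self) hd_lim
    (Eventually.of_forall fun n => ?_)
  calc ∫ x in Ioc a (d n), ‖g x‖ = ∫ x in a..d n, g x := by
        rw [intervalIntegral.integral_of_le (hd n).1.le]
        refine setIntegral_congr_fun measurableSet_Ioc fun x hx => norm_of_nonneg (hg0 x ?_)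
        exact ⟨hx.1, hx.2.trans_lt (hd n).2⟩
    _ ≤ M := hM _ (hd n)

lemma integrableOn_Ioc_of_hasDerivAt_le_neg {u u' g : ℝ → ℝ} {a b C : ℝ} (hab : a < b)
    (hu : ∀ x ∈ Ico a b, HasDerivAt u (u' x) x) (hC : ∀ x ∈ Ico a b, |u x| ≤ C)
    (hg : ContinuousOn g (Ico a b)) (hg0 : ∀ x ∈ Ioo a b, 0 ≤ g x)
    (hgu : ∀ x ∈ Ioo a b, g x ≤ -u' x) : IntegrableOn g (Ioc a b) := by
  refine integrableOn_Ioc_of_intervalIntegral_le (M := 2 * C) hab hg hg0 fun d hd => ?_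
  have hsub : Icc a d ⊆ Ico a b := Icc_subset_Ico_right hd.2
  calc ∫ x in a..d, g x ≤ -u d - -u a :=
        intervalIntegral.integral_le_sub_of_hasDeriv_right_of_le hd.1.le
          (fun x hx => (hu x (hsub hx)).continuousAt.continuousWithinAt.neg)
          (fun x hx => (hu x (hsub (Ioo_subset_Icc_self hx))).neg.hasDerivWithinAt)
          (hg.mono hsub).integrableOn_Icc
          (fun x hx => hgu x (Ioo_subset_Ioo_right hd.2.le hx))
    _ ≤ 2 * C := by
        have := abs_le.1 (hC a (hsub (left_mem_Icc.2 hd.1.le)))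
        have := abs_le.1 (hC d (hsub (right_mem_Icc.2 hd.1.le)))
        linarith
lemma integrableOn_rpow_neg_half_of_div_sqrt_one_add_sq_le {u u' I : ℝ → ℝ} {a z C : ℝ}
    (haz : a < z) (hu : ∀ x ∈ Ioo a z, HasDerivAt u (u' x) x) (hC : ∀ x ∈ Ioo a z, |u x| ≤ C)
    (hI : ContinuousOn I (Ioo a z)) (hI_pos : ∀ x ∈ Ioo a z, 0 < I x)
    (hI_anti : AntitoneOn I (Ioo a z)) (hI_lim : Tendsto I (𝓝[<] z) (𝓝 0))
    (hu' : ∀ x ∈ Ioo a z, u' x / √(1 + u' x ^ 2) ≤ -1 + I x) :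
    IntegrableOn (fun x => I x ^ (-(1 : ℝ) / 2)) (Ioo a z) := by
  set g := fun x => I x ^ (-(1 : ℝ) / 2)
  have hg : ContinuousOn g (Ioo a z) := hI.rpow_const fun x hx => Or.inl (hI_pos x hx).ne'
  have hg0 : ∀ x ∈ Ioo a z, 0 ≤ g x := fun x hx => rpow_nonneg (hI_pos x hx).le _
  obtain ⟨a₁, ha₁z, hI_small⟩ := (mem_nhdsLT_iff_exists_Ioo_subset' haz).1
    (hI_lim.eventually (eventually_le_nhds (show (0 : ℝ) < 1 / 4 by norm_num)))
  obtain ⟨b, hb, hbz⟩ := exists_between (max_lt ha₁z haz)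
  have hab : a < b := (le_max_right _ _).trans_lt hb
  have h_left : IntegrableOn g (Ioc a b) := by
    refine IntegrableOn.of_bound measure_Ioc_lt_top
      ((hg.mono (Ioc_subset_Ioo_right hbz)).aestronglyMeasurable measurableSet_Ioc) (g b)
      (ae_restrict_of_forall_mem measurableSet_Ioc fun x hx => ?_)
    have hx' : x ∈ Ioo a z := ⟨hx.1, hx.2.trans_lt hbz⟩
    rw [norm_of_nonneg (hg0 x hx')]
    exact rpow_le_rpow_of_nonpos (hI_pos b ⟨hab, hbz⟩) (hI_anti hx' ⟨hab, hbz⟩ hx.2)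
      (by norm_num)
  have h_right : IntegrableOn g (Ioc b z) := by
    have hsub : Ico b z ⊆ Ioo a z := Ico_subset_Ioo_left hab
    refine integrableOn_Ioc_of_hasDerivAt_le_neg (u := fun x => 2 * u x)
      (u' := fun x => 2 * u' x) (C := 2 * C) hbz (fun x hx => (hu x (hsub hx)).const_mul 2)
      (fun x hx => ?_) (hg.mono hsub) (fun x hx => hg0 x (hsub (Ioo_subset_Ico_self hx)))
      (fun x hx => ?_)
    · rw [abs_mul, abs_two]
      linarith [hC x (hsub hx)]
    · have hx' : x ∈ Ioo a z := hsub (Ioo_subset_Ico_self hx)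
      exact rpow_neg_half_le_of_div_sqrt_one_add_sq_le (hI_pos x hx')
        (hI_small ⟨(le_max_left _ _).trans_lt (hb.trans hx.1), hx.2⟩) (hu' x hx')
  refine (h_left.union h_right).mono_set ?_
  rw [Ioc_union_Ioc_eq_Ioc hab.le hbz.le]
  exact Ioo_subset_Ioc_self

theorem stmt8_general (h : ℝ → ℝ) (z δ₁ : ℝ) (u u' : ℝ → ℝ)
    (hz : z ∈ Ioo (0:ℝ) 1) (hδ₁ : 0 < δ₁)
    (hsub1 : 0 ≤ z - δ₁)
    (hhint : IntegrableOn h (Ioo 0 1) volume)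
    (hpos : ∀ᵐ x ∂(volume.restrict (Ioo (z - δ₁) z)), 0 ≤ h x)
    (hderiv : ∀ x ∈ Ioo (z - δ₁) z, HasDerivAt u (u' x) x)
    (hFTC : ∀ x ∈ Ioo (z - δ₁) z, ∀ y ∈ Ioo (z - δ₁) z,
      u' y / Real.sqrt (1 + (u' y) ^ 2) - u' x / Real.sqrt (1 + (u' x) ^ 2)
        = -∫ t in x..y, h t)
    (hbdd : ∃ C, ∀ x ∈ Ioo (z - δ₁) z, |u x| ≤ C)
    (hIpos : ∀ x ∈ Ioo (z - δ₁) z, 0 < ∫ t in x..z, h t)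
    (hdiv : ¬ IntegrableOn (fun x => (∫ t in x..z, h t) ^ (-(1:ℝ)/2))
      (Ioo (z - δ₁) z) volume) :
    ∃ L : ℝ, Tendsto u' (nhdsWithin z (Iio z)) (nhds L) := by
  obtain ⟨C, hC⟩ := hbdd
  have hδz : z - δ₁ < z := by linarith
  have hh : IntervalIntegrable h volume (z - δ₁) z :=
    (intervalIntegrable_iff_integrableOn_Ioc_of_le hδz.le).2
      (hhint.mono_set fun t ht => ⟨hsub1.trans_lt ht.1, ht.2.trans_lt hz.2⟩)
  have hh_sub : ∀ x ∈ Ioo (z - δ₁) z, ∀ y ∈ Icc (z - δ₁) z, IntervalIntegrable h volume x y :=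
    fun x hx y hy => hh.mono_set (uIcc_subset_uIcc (Icc_subset_uIcc (Ioo_subset_Icc_self hx))
      (Icc_subset_uIcc hy))
  set I : ℝ → ℝ := fun x => ∫ t in x..z, h t
  have hI_lim : Tendsto I (𝓝[<] z) (𝓝 0) := tendsto_integral_left_nhdsLT hh hδz
  have hI_anti : AntitoneOn I (Ioo (z - δ₁) z) :=
    (antitoneOn_integral_left hh ((ae_restrict_congr_set Ioo_ae_eq_Ioc).1 hpos)).mono
      Ioo_subset_Icc_self
  set φ : ℝ → ℝ := fun x => u' x / √(1 + u' x ^ 2)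
  obtain ⟨x₀, hx₀⟩ : (Ioo (z - δ₁) z).Nonempty := nonempty_Ioo.2 hδz
  set c := φ x₀ - I x₀
  have hφ : ∀ x ∈ Ioo (z - δ₁) z, φ x = c + I x := fun x hx => by
    linarith [hFTC x hx x₀ hx₀, intervalIntegral.integral_interval_sub_left
      (hh_sub x hx z (right_mem_Icc.2 hδz.le)) (hh_sub x hx x₀ (Ioo_subset_Icc_self hx₀))]
  have hφ_lim : Tendsto φ (𝓝[<] z) (𝓝 c) := by
    have hlim := tendsto_const_nhds (x := c) |>.add hI_lim
    rw [add_zero] at hlim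
    exact hlim.congr' (mem_of_superset (Ioo_mem_nhdsLT hδz) fun x hx => (hφ x hx).symm)
  have hc1 : c < 1 := by linarith [hφ x₀ hx₀, div_sqrt_one_add_sq_lt_one (u' x₀), hIpos x₀ hx₀]
  rcases lt_or_ge (-1) c with hc | hc
  · exact ⟨_, tendsto_of_tendsto_div_sqrt_one_add_sq ⟨hc, hc1⟩ hφ_lim⟩
  · refine absurd (integrableOn_rpow_neg_half_of_div_sqrt_one_add_sq_le hδz hderiv hC
      ((continuousOn_integral_left hh hδz.le).mono Ioo_subset_Icc_self) hIpos hI_anti hI_lim fun x hx => ?_) hdiv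
    linarith [hφ x hx]

theorem stmt8 (h : ℝ → ℝ) (z δ₁ δ₂ : ℝ) (u u' : ℝ → ℝ)
    (hz : z ∈ Ioo (0:ℝ) 1) (hδ₁ : 0 < δ₁) (hδ₂ : 0 < δ₂)
    (hsub1 : 0 ≤ z - δ₁) (hsub2 : z + δ₂ ≤ 1)
    (hhint : IntegrableOn h (Ioo 0 1) volume)
    (hpos : ∀ᵐ x ∂(volume.restrict (Ioo (z - δ₁) z)), 0 ≤ h x)
    (hneg : ∀ᵐ x ∂(volume.restrict (Ioo z (z + δ₂))), h x ≤ 0)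
    (hderiv : ∀ x ∈ Ioo (z - δ₁) z, HasDerivAt u (u' x) x)
    (hFTC : ∀ x ∈ Ioo (z - δ₁) z, ∀ y ∈ Ioo (z - δ₁) z,
      u' y / Real.sqrt (1 + (u' y) ^ 2) - u' x / Real.sqrt (1 + (u' x) ^ 2)
        = -∫ t in x..y, h t)
    (hbdd : ∃ C, ∀ x ∈ Ioo (z - δ₁) z, |u x| ≤ C)
    (hIpos : ∀ x ∈ Ioo (z - δ₁) z, 0 < ∫ t in x..z, h t)
    (hdiv : ¬ IntegrableOn (fun x => (∫ t in x..z, h t) ^ (-(1:ℝ)/2))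
      (Ioo (z - δ₁) z) volume) :
    ∃ L : ℝ, Tendsto u' (nhdsWithin z (Iio z)) (nhds L) :=
  stmt8_general h z δ₁ u u' hz hδ₁ hsub1 hhint hpos hderiv hFTC hbdd hIpos hdiv
end

section
/- Let a ∈ L^∞(0,1) satisfy a > 0 a.e. on (0,z), a < 0 a.e. on (z,1) for some z ∈ (0,1), and suppose either ∫₀^z (∫_x^z a(t)dt)^{-1/2} dx = ∞ or ∫_z^1 (∫_x^z a(t)dt)^{-1/2} dx = ∞. Let f be continuous with f(u) ≥ 0 for u ≥ 0, λ > 0, and let u be a bounded nonnegative function that solves -(u'/√(1+(u')²))' = λ a(x) f(u) in the bounded-variation sense, being W^{2,1}_loc and concave on (0,z), W^{2,1}_loc and convex on (z,1). If u'(z⁻) = -∞ = u'(z⁺), then a contradiction follows; hence u ∈ W^{2,1}_loc(0,1), i.e., u is regular. -/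
/-!
Write `φ s = s / √(1 + s ^ 2)` and `A x = ∫ t in x..z, a t`, and let `K` bound `λ f ∘ u`.
On the left of `z`, integrating the equation from `x` to `y` and letting `y → z⁻`, where
`φ (u' y) → -1`, gives `1 + φ (u' x) ≤ K A x`. Since `1 + φ s` is of order `1 / s ^ 2` as
`s → -∞` and `A x → 0`, this forces `A x ^ (-1/2) ≤ 2 √K (-u' x)` near `z`, and the right-hand
side has a bounded integral because `u` is bounded. Away from `z`, `A ^ (-1/2)` is monotone and
bounded. So `A ^ (-1/2)` is integrable on `(0, z)`, and by the reflection `x ↦ -x` also on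
`(z, 1)`, contradicting the divergence hypothesis.
-/

open Filter Set MeasureTheory Topology

lemma tendsto_div_sqrt_one_add_sq_atBot :
    Tendsto (fun t : ℝ => t / √(1 + t ^ 2)) atBot (𝓝 (-1)) := by
  have h := (Real.continuous_sin.tendsto _).comp
    (tendsto_nhds_of_tendsto_nhdsWithin Real.tendsto_arctan_atBot)
  simpa [Function.comp_def, Real.sin_arctan] using h

lemma rpow_neg_half_le_of_one_add_div_sqrt_le {t K A : ℝ} (hK : 0 < K) (hA : 0 < A)
    (h : 1 + t / √(1 + t ^ 2) ≤ K * A) (hKA : K * A ≤ 1 / 4) :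
    A ^ (-(1:ℝ) / 2) ≤ 2 * √K * -t := by
  set s := √(1 + t ^ 2)
  have hs : s ^ 2 = 1 + t ^ 2 := Real.sq_sqrt (by positivity)
  have hts : |t| < s := by
    rw [← Real.sqrt_sq_eq_abs]; exact Real.sqrt_lt_sqrt (sq_nonneg t) (by linarith)
  have hs0 : 0 < s := (abs_nonneg t).trans_lt hts
  -- `(s + t) (s - t) = 1` and `s + t ≤ K A s ≤ s / 4`, so `s ≤ -4t/3` and
  -- `1 ≤ K A s (s - t) ≤ 4 K A t²`.
  rw [add_div' _ _ _ hs0.ne', div_le_iff₀ hs0] at h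
  have hst : 0 < s - t := by linarith [le_abs_self t]
  have hs4 : s ≤ 4 / 3 * -t := by nlinarith
  have hone : 1 ≤ K * A * s * (s - t) := by nlinarith
  have hss : s * (s - t) ≤ 28 / 9 * t ^ 2 := by nlinarith
  have hsq : 1 ≤ 4 * (K * A) * t ^ 2 := by
    nlinarith [mul_le_mul_of_nonneg_left hss (by positivity : (0:ℝ) ≤ K * A)]
  have hr2 : √(K * A) ^ 2 = K * A := Real.sq_sqrt (by positivity)
  have h1 : 1 ≤ 2 * -t * √(K * A) := by
    have hX : 0 ≤ 2 * -t * √(K * A) := by nlinarith [Real.sqrt_nonneg (K * A)]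
    nlinarith
  rw [show -(1:ℝ) / 2 = -(1 / 2) by ring, Real.rpow_neg hA.le, ← Real.sqrt_eq_rpow,
    inv_le_iff_one_le_mul₀ (Real.sqrt_pos.2 hA)]
  rw [Real.sqrt_mul hK.le] at h1
  linarith

lemma tendsto_intervalIntegral_nhdsLT {f : ℝ → ℝ} {x₀ z : ℝ} (hx₀ : x₀ < z)
    (hf : IntervalIntegrable f volume x₀ z) :
    Tendsto (fun x => ∫ t in x..z, f t) (𝓝[<] z) (𝓝 0) := by
  have h := intervalIntegral.continuousOn_primitive_interval_left
    ((intervalIntegrable_iff' (μ := volume)).1 hf) z right_mem_uIcc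
  rw [ContinuousWithinAt, intervalIntegral.integral_same] at h
  exact h.mono_left (nhdsWithin_le_of_mem (by rw [uIcc_of_le hx₀.le]; exact Icc_mem_nhdsLT hx₀))

section

variable {a : ℝ → ℝ} {p z : ℝ}

lemma intervalIntegral_pos_of_ae_pos (hapos : ∀ᵐ x ∂volume.restrict (Ioo p z), 0 < a x)
    {x : ℝ} (hx : x ∈ Ioo p z) (hint : IntervalIntegrable a volume x z) :
    0 < ∫ t in x..z, a t := by
  have ha := ae_restrict_of_ae_restrict_of_subset (Ioo_subset_Ioo_left hx.1.le) hapos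
  rw [Measure.restrict_congr_set Ioo_ae_eq_Ioc] at ha
  rw [intervalIntegral.integral_pos_iff_support_of_nonneg_ae'
    (by rw [uIoc_of_le hx.2.le]; exact ha.mono fun t ht => ht.le) hint]
  refine ⟨hx.2, (by simpa using hx.2 : 0 < volume (Ioc x z)).trans_le (measure_mono_ae ?_)⟩
  filter_upwards [(ae_restrict_iff' measurableSet_Ioc).1 ha] with t ht hmem
  exact ⟨(ht hmem).ne', hmem⟩

lemma intervalIntegral_nonneg_of_ae_pos (hapos : ∀ᵐ x ∂volume.restrict (Ioo p z), 0 < a x)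
    {x : ℝ} (hx : x ∈ Ioo p z) : 0 ≤ ∫ t in x..z, a t := by
  by_cases hint : IntervalIntegrable a volume x z
  · exact (intervalIntegral_pos_of_ae_pos hapos hx hint).le
  · rw [intervalIntegral.integral_undef hint]

lemma monotoneOn_rpow_intervalIntegral (hapos : ∀ᵐ x ∂volume.restrict (Ioo p z), 0 < a x)
    {r : ℝ} (hr : r < 0) : MonotoneOn (fun x => (∫ t in x..z, a t) ^ r) (Ioo p z) := by
  intro x hx y hy hxy
  by_cases hint : IntervalIntegrable a volume x z
  · have hy' : y ∈ uIcc x z := mem_uIcc_of_le hxy hy.2.le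
    have hxy' := hint.mono_set (uIcc_subset_uIcc_left hy')
    have hyz := hint.mono_set (uIcc_subset_uIcc_right hy')
    have hle : 0 ≤ ∫ t in x..y, a t := intervalIntegral.integral_nonneg_of_ae_restrict hxy
      ((ae_restrict_of_ae_restrict_of_subset (Icc_subset_Ioo hx.1 hy.2) hapos).mono
        fun t ht => ht.le)
    refine Real.rpow_le_rpow_of_nonpos (intervalIntegral_pos_of_ae_pos hapos hy hyz) ?_ hr.le
    rw [← intervalIntegral.integral_add_adjacent_intervals hxy' hyz]
    linarith
  · simp only [intervalIntegral.integral_undef hint, Real.zero_rpow hr.ne]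
    exact Real.rpow_nonneg (intervalIntegral_nonneg_of_ae_pos hapos hy) r

lemma one_add_div_sqrt_le_mul_intervalIntegral {w u' : ℝ → ℝ} {K x : ℝ}
    (hapos : ∀ᵐ x ∂volume.restrict (Ioo p z), 0 < a x)
    (hw : ContinuousOn w (Ioo p z)) (hwK : ∀ x ∈ Ioo p z, w x ≤ K)
    (hflux : ∀ x ∈ Ioo p z, ∀ y ∈ Ioo p z,
      u' y / √(1 + u' y ^ 2) - u' x / √(1 + u' x ^ 2) = -∫ t in x..y, a t * w t)
    (hlim : Tendsto u' (𝓝[<] z) atBot) (hx : x ∈ Ioo p z)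
    (hint : IntervalIntegrable a volume x z) :
    1 + u' x / √(1 + u' x ^ 2) ≤ K * ∫ t in x..z, a t := by
  set A := fun y => ∫ t in y..z, a t
  have hle : ∀ y ∈ Ioo x z,
      u' x / √(1 + u' x ^ 2) - u' y / √(1 + u' y ^ 2) ≤ K * (A x - A y) := by
    intro y hy
    have hsub : Icc x y ⊆ Ioo p z := Icc_subset_Ioo hx.1 hy.2
    have hy' : y ∈ uIcc x z := mem_uIcc_of_le hy.1.le hy.2.le
    have hxy := hint.mono_set (uIcc_subset_uIcc_left hy')
    have hyz := hint.mono_set (uIcc_subset_uIcc_right hy')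
    have hmono : ∫ t in x..y, a t * w t ≤ ∫ t in x..y, K * a t := by
      refine intervalIntegral.integral_mono_ae_restrict hy.1.le
        (hxy.mul_continuousOn (hw.mono (by rwa [uIcc_of_le hy.1.le]))) (hxy.const_mul K) ?_
      filter_upwards [ae_restrict_of_ae_restrict_of_subset hsub hapos,
        ae_restrict_mem measurableSet_Icc] with t hat ht
      rw [mul_comm K]
      exact mul_le_mul_of_nonneg_left (hwK t (hsub ht)) hat.le
    have hsplit : ∫ t in x..y, a t = A x - A y := eq_sub_of_add_eq <|
      intervalIntegral.integral_add_adjacent_intervals hxy hyz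
    rw [intervalIntegral.integral_const_mul, hsplit] at hmono
    linarith [hflux x (hsub (left_mem_Icc.2 hy.1.le)) y (hsub (right_mem_Icc.2 hy.1.le))]
  have hlim' : Tendsto (fun y => K * (A x - A y) + u' y / √(1 + u' y ^ 2)) (𝓝[<] z)
      (𝓝 (K * (A x - 0) + -1)) :=
    ((tendsto_const_nhds.sub (tendsto_intervalIntegral_nhdsLT hx.2 hint)).const_mul K).add
      (tendsto_div_sqrt_one_add_sq_atBot.comp hlim)
  have : u' x / √(1 + u' x ^ 2) ≤ K * (A x - 0) + -1 := ge_of_tendsto hlim' (by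
    filter_upwards [Ioo_mem_nhdsLT hx.2] with y hy
    linarith [hle y hy])
  linarith

end

section

variable {F g g' : ℝ → ℝ} {p c z : ℝ}

lemma integrableOn_Ioc_of_le_hasDerivAt_of_bddAbove (hcz : c < z)
    (hF : ∀ y ∈ Ioo c z, IntegrableOn F (Icc c y)) (hF0 : ∀ x ∈ Ioo c z, 0 ≤ F x)
    (hg : ∀ x ∈ Ico c z, HasDerivAt g (g' x) x) (hFg : ∀ x ∈ Ioo c z, F x ≤ g' x)
    (hgB : BddAbove (g '' Ioo c z)) : IntegrableOn F (Ioc c z) := by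
  obtain ⟨B, hB⟩ := hgB
  obtain ⟨b, -, hb, hbz⟩ := exists_seq_strictMono_tendsto' hcz
  refine integrableOn_Ioc_of_intervalIntegral_norm_bounded_right (I := B - g c)
    (fun n => (hF _ (hb n)).mono_set Ioc_subset_Icc_self) hbz (Eventually.of_forall fun n => ?_)
  have hcb := (hb n).1.le
  have hsub : Icc c (b n) ⊆ Ico c z := Icc_subset_Ico_right (hb n).2
  calc ∫ x in Ioc c (b n), ‖F x‖ = ∫ x in c..b n, F x := by
        rw [intervalIntegral.integral_of_le hcb]
        exact setIntegral_congr_fun measurableSet_Ioc fun x hx =>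
          Real.norm_of_nonneg (hF0 x ⟨hx.1, hx.2.trans_lt (hb n).2⟩)
    _ ≤ g (b n) - g c := intervalIntegral.integral_le_sub_of_hasDeriv_right_of_le hcb
        (fun x hx => (hg x (hsub hx)).continuousAt.continuousWithinAt)
        (fun x hx => (hg x (hsub (Ioo_subset_Icc_self hx))).hasDerivWithinAt) (hF _ (hb n))
        (fun x hx => hFg x ⟨hx.1, hx.2.trans (hb n).2⟩)
    _ ≤ B - g c := by linarith [hB ⟨b n, hb n, rfl⟩]

lemma MonotoneOn.integrableOn_Ioo_of_le_hasDerivAt (hF : MonotoneOn F (Ioo p z))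
    (hF0 : ∀ x ∈ Ioo p z, 0 ≤ F x) (hc : c ∈ Ioo p z)
    (hg : ∀ x ∈ Ico c z, HasDerivAt g (g' x) x) (hFg : ∀ x ∈ Ioo c z, F x ≤ g' x)
    (hgB : BddAbove (g '' Ioo c z)) : IntegrableOn F (Ioo p z) := by
  have hsub : Ioc p c ⊆ Ioo p z := Ioc_subset_Ioo_right hc.2
  have hlow : IntegrableOn F (Ioc p c) := by
    refine .of_bound measure_Ioc_lt_top
      (aemeasurable_restrict_of_monotoneOn measurableSet_Ioc (hF.mono hsub)).aestronglyMeasurable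
      (F c) ?_
    filter_upwards [ae_restrict_mem measurableSet_Ioc] with x hx
    rw [Real.norm_of_nonneg (hF0 x (hsub hx))]
    exact hF (hsub hx) hc hx.2
  have hhigh := integrableOn_Ioc_of_le_hasDerivAt_of_bddAbove hc.2
    (fun y hy => MonotoneOn.integrableOn_isCompact isCompact_Icc
      (hF.mono (Icc_subset_Ioo hc.1 hy.2)))
    (fun x hx => hF0 x ⟨hc.1.trans hx.1, hx.2⟩) hg hFg hgB
  have hunion := hlow.union hhigh
  rw [Ioc_union_Ioc_eq_Ioc hc.1.le hc.2.le] at hunion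
  exact hunion.mono_set Ioo_subset_Ioc_self

end

theorem integrableOn_rpow_intervalIntegral_of_tendsto_atBot_left {a w u u' : ℝ → ℝ} {p z K : ℝ}
    (hK : 0 < K) (hapos : ∀ᵐ x ∂volume.restrict (Ioo p z), 0 < a x)
    (hw : ContinuousOn w (Ioo p z)) (hwK : ∀ x ∈ Ioo p z, w x ≤ K)
    (hu : ∀ x ∈ Ioo p z, HasDerivAt u (u' x) x) (hub : BddBelow (u '' Ioo p z))
    (hflux : ∀ x ∈ Ioo p z, ∀ y ∈ Ioo p z,
      u' y / √(1 + u' y ^ 2) - u' x / √(1 + u' x ^ 2) = -∫ t in x..y, a t * w t)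
    (hlim : Tendsto u' (𝓝[<] z) atBot) :
    IntegrableOn (fun x => (∫ t in x..z, a t) ^ (-(1:ℝ) / 2)) (Ioo p z) := by
  by_cases hS : ∃ x₀ ∈ Ioo p z, IntervalIntegrable a volume x₀ z
  swap
  · -- the integrals are all junk `0`, and so is `0 ^ (-1/2)`
    push Not at hS
    refine integrableOn_zero.congr_fun (fun x hx => ?_) measurableSet_Ioo
    simp [intervalIntegral.integral_undef (hS x hx)]
  obtain ⟨x₀, hx₀, ha⟩ := hS
  have hbound : ∀ᶠ x in 𝓝[<] z, (∫ t in x..z, a t) ^ (-(1:ℝ) / 2) ≤ 2 * √K * -u' x := by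
    filter_upwards [Ioo_mem_nhdsLT hx₀.2, ((tendsto_intervalIntegral_nhdsLT hx₀.2 ha).const_mul
      K).eventually (eventually_le_nhds (by norm_num : K * 0 < 1 / 4))] with x hx hxA
    have hxp : x ∈ Ioo p z := ⟨hx₀.1.trans hx.1, hx.2⟩
    have hint := ha.mono_set (uIcc_subset_uIcc_right (mem_uIcc_of_le hx.1.le hx.2.le))
    exact rpow_neg_half_le_of_one_add_div_sqrt_le hK (intervalIntegral_pos_of_ae_pos hapos hxp hint)
      (one_add_div_sqrt_le_mul_intervalIntegral hapos hw hwK hflux hlim hxp hint) hxA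
  obtain ⟨c, hc, hcF⟩ := (mem_nhdsLT_iff_exists_mem_Ico_Ioo_subset hx₀.2).1 hbound
  have hcz : Ico c z ⊆ Ioo p z := Ico_subset_Ioo_left (hx₀.1.trans_le hc.1)
  obtain ⟨m, hm⟩ := hub
  refine (monotoneOn_rpow_intervalIntegral hapos (by norm_num)).integrableOn_Ioo_of_le_hasDerivAt
    (fun x hx => Real.rpow_nonneg (intervalIntegral_nonneg_of_ae_pos hapos hx) _)
    (hcz (left_mem_Ico.2 hc.2)) (g := fun x => -(2 * √K) * u x)
    (fun x hx => (hu x (hcz hx)).const_mul _) (fun x hx => le_of_le_of_eq (hcF hx) (by ring))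
    ⟨-(2 * √K) * m, forall_mem_image.2 fun x hx => ?_⟩
  have := hm (mem_image_of_mem u (hcz (Ioo_subset_Ico_self hx)))
  nlinarith [Real.sqrt_nonneg K]

theorem integrableOn_rpow_intervalIntegral_of_tendsto_atBot_right {a w u u' : ℝ → ℝ} {z q K : ℝ}
    (hK : 0 < K) (haneg : ∀ᵐ x ∂volume.restrict (Ioo z q), a x < 0)
    (hw : ContinuousOn w (Ioo z q)) (hwK : ∀ x ∈ Ioo z q, w x ≤ K)
    (hu : ∀ x ∈ Ioo z q, HasDerivAt u (u' x) x) (hub : BddAbove (u '' Ioo z q))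
    (hflux : ∀ x ∈ Ioo z q, ∀ y ∈ Ioo z q,
      u' y / √(1 + u' y ^ 2) - u' x / √(1 + u' x ^ 2) = -∫ t in x..y, a t * w t)
    (hlim : Tendsto u' (𝓝[>] z) atBot) :
    IntegrableOn (fun x => (∫ t in x..z, a t) ^ (-(1:ℝ) / 2)) (Ioo z q) := by
  have hneg : MapsTo Neg.neg (Ioo (-q) (-z)) (Ioo z q) :=
    fun x hx => ⟨by linarith [hx.2], by linarith [hx.1]⟩
  have hmp : MeasurePreserving Neg.neg (volume.restrict (Ioo (-q) (-z)))
      (volume.restrict (Ioo z q)) := by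
    simpa using (Measure.measurePreserving_neg volume).restrict_preimage_emb
      (Homeomorph.neg ℝ).measurableEmbedding (Ioo z q)
  have hA : ∀ x, ∫ t in x..-z, -a (-t) = ∫ t in -x..z, a t := fun x => by
    rw [intervalIntegral.integral_comp_neg (fun t => -a t), intervalIntegral.integral_neg,
      intervalIntegral.integral_symm, neg_neg, neg_neg]
  have key := integrableOn_rpow_intervalIntegral_of_tendsto_atBot_left (a := fun x => -a (-x))
    (w := fun x => w (-x)) (u := fun x => -u (-x)) (u' := fun x => u' (-x)) hK
    (hmp.quasiMeasurePreserving.ae (haneg.mono fun x hx => neg_pos.2 hx))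
    (hw.comp continuousOn_neg hneg) (fun x hx => hwK _ (hneg hx))
    (fun x hx => ((hu _ (hneg hx)).comp x (hasDerivAt_neg x)).neg.congr_deriv (by ring))
    (by
      obtain ⟨m, hm⟩ := hub
      refine ⟨-m, forall_mem_image.2 fun x hx => ?_⟩
      simpa using hm (mem_image_of_mem u (hneg hx)))
    (fun x hx y hy => by
      rw [hflux _ (hneg hx) _ (hneg hy), intervalIntegral.integral_comp_neg (fun t => -a t * w t),
        intervalIntegral.integral_symm (-y) (-x)]
      simp only [neg_mul, intervalIntegral.integral_neg])
    (hlim.comp (by simpa using tendsto_neg_nhdsLT (a := -z)))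
  rw [← (Measure.measurePreserving_neg volume).integrableOn_comp_preimage
    (Homeomorph.neg ℝ).measurableEmbedding]
  simpa [Function.comp_def, hA] using key

theorem stmt10_general (a f : ℝ → ℝ) (lam z : ℝ) (u u' : ℝ → ℝ)
    (hz : z ∈ Ioo (0:ℝ) 1)
    (hapos : ∀ᵐ x ∂(volume.restrict (Ioo (0:ℝ) z)), 0 < a x)
    (haneg : ∀ᵐ x ∂(volume.restrict (Ioo z 1)), a x < 0)
    (hdiv : (¬ IntegrableOn (fun x => (∫ t in x..z, a t) ^ (-(1:ℝ)/2))
        (Ioo 0 z) volume) ∨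
      (¬ IntegrableOn (fun x => (∫ t in x..z, a t) ^ (-(1:ℝ)/2))
        (Ioo z 1) volume))
    (hf : Continuous f)
    (hubdd : ∃ C, ∀ x ∈ Icc (0:ℝ) 1, |u x| ≤ C)
    (hderiv : ∀ x ∈ (Ioo (0:ℝ) 1) \ {z}, HasDerivAt u (u' x) x)
    (hFTC1 : ∀ x ∈ Ioo (0:ℝ) z, ∀ y ∈ Ioo (0:ℝ) z,
      u' y / Real.sqrt (1 + (u' y) ^ 2) - u' x / Real.sqrt (1 + (u' x) ^ 2)
        = -∫ t in x..y, lam * a t * f (u t))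
    (hFTC2 : ∀ x ∈ Ioo z 1, ∀ y ∈ Ioo z 1,
      u' y / Real.sqrt (1 + (u' y) ^ 2) - u' x / Real.sqrt (1 + (u' x) ^ 2)
        = -∫ t in x..y, lam * a t * f (u t)) :
    ¬ (Tendsto u' (nhdsWithin z (Iio z)) atBot ∧
       Tendsto u' (nhdsWithin z (Ioi z)) atBot) := by
  rintro ⟨hL, hR⟩
  obtain ⟨C, hC⟩ := hubdd
  set w := fun x => lam * f (u x)
  have huC : ∀ x ∈ Ioo (0:ℝ) 1 \ {z}, u x ∈ Icc (-C) C :=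
    fun x hx => abs_le.1 (hC x (Ioo_subset_Icc_self hx.1))
  obtain ⟨K, hK, hwK⟩ : ∃ K, 0 < K ∧ ∀ x ∈ Ioo (0:ℝ) 1 \ {z}, w x ≤ K := by
    obtain ⟨K₀, hK₀⟩ := isCompact_Icc.exists_bound_of_continuousOn
      (continuous_const.mul hf).continuousOn (f := fun s => lam * f s) (s := Icc (-C) C)
    exact ⟨max K₀ 1, by positivity,
      fun x hx => (le_abs_self _).trans ((hK₀ _ (huC x hx)).trans (le_max_left _ _))⟩
  have hw : ContinuousOn w (Ioo (0:ℝ) 1 \ {z}) := fun x hx =>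
    ((continuous_const.mul hf).continuousAt.comp (hderiv x hx).continuousAt).continuousWithinAt
  have hflux : ∀ x y, ∫ t in x..y, lam * a t * f (u t) = ∫ t in x..y, a t * w t :=
    fun x y => intervalIntegral.integral_congr fun t _ => by ring
  have hleft : Ioo 0 z ⊆ Ioo (0:ℝ) 1 \ {z} := fun x hx => ⟨⟨hx.1, hx.2.trans hz.2⟩, hx.2.ne⟩
  have hright : Ioo z 1 ⊆ Ioo (0:ℝ) 1 \ {z} := fun x hx => ⟨⟨hz.1.trans hx.1, hx.2⟩, hx.1.ne'⟩
  rcases hdiv with hdiv | hdiv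
  · exact hdiv (integrableOn_rpow_intervalIntegral_of_tendsto_atBot_left hK hapos (hw.mono hleft)
      (fun x hx => hwK x (hleft hx)) (fun x hx => hderiv x (hleft hx))
      ⟨-C, forall_mem_image.2 fun x hx => (huC x (hleft hx)).1⟩
      (fun x hx y hy => by rw [hFTC1 x hx y hy, hflux]) hL)
  · exact hdiv (integrableOn_rpow_intervalIntegral_of_tendsto_atBot_right hK haneg (hw.mono hright)
      (fun x hx => hwK x (hright hx)) (fun x hx => hderiv x (hright hx))
      ⟨C, forall_mem_image.2 fun x hx => (huC x (hright hx)).2⟩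
      (fun x hx y hy => by rw [hFTC2 x hx y hy, hflux]) hR)

theorem stmt10 (a f : ℝ → ℝ) (lam z : ℝ) (u u' : ℝ → ℝ)
    (hz : z ∈ Ioo (0:ℝ) 1)
    (habd : ∃ C, ∀ᵐ x ∂(volume.restrict (Ioo (0:ℝ) 1)), |a x| ≤ C)
    (hapos : ∀ᵐ x ∂(volume.restrict (Ioo (0:ℝ) z)), 0 < a x)
    (haneg : ∀ᵐ x ∂(volume.restrict (Ioo z 1)), a x < 0)
    (hdiv : (¬ IntegrableOn (fun x => (∫ t in x..z, a t) ^ (-(1:ℝ)/2))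
        (Ioo 0 z) volume) ∨
      (¬ IntegrableOn (fun x => (∫ t in x..z, a t) ^ (-(1:ℝ)/2))
        (Ioo z 1) volume))
    (hf : Continuous f) (hfnn : ∀ s, 0 ≤ s → 0 ≤ f s)
    (hlam : 0 < lam)
    (hubdd : ∃ C, ∀ x ∈ Icc (0:ℝ) 1, |u x| ≤ C)
    (hunn : ∀ x ∈ Icc (0:ℝ) 1, 0 ≤ u x)
    (hconc : ConcaveOn ℝ (Ioo 0 z) u) (hconv : ConvexOn ℝ (Ioo z 1) u)
    (hderiv : ∀ x ∈ (Ioo (0:ℝ) 1) \ {z}, HasDerivAt u (u' x) x)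
    (hFTC1 : ∀ x ∈ Ioo (0:ℝ) z, ∀ y ∈ Ioo (0:ℝ) z,
      u' y / Real.sqrt (1 + (u' y) ^ 2) - u' x / Real.sqrt (1 + (u' x) ^ 2)
        = -∫ t in x..y, lam * a t * f (u t))
    (hFTC2 : ∀ x ∈ Ioo z 1, ∀ y ∈ Ioo z 1,
      u' y / Real.sqrt (1 + (u' y) ^ 2) - u' x / Real.sqrt (1 + (u' x) ^ 2)
        = -∫ t in x..y, lam * a t * f (u t)) :
    ¬ (Tendsto u' (nhdsWithin z (Iio z)) atBot ∧
       Tendsto u' (nhdsWithin z (Ioi z)) atBot) :=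
  stmt10_general a f lam z u u' hz hapos haneg hdiv hf hubdd hderiv hFTC1 hFTC2
end

section
/- Let a ∈ L^∞(0,1) be positive a.e. on (0,z) and negative a.e. on (z,1), let f be continuous with f(u) > 0 for u > 0, λ > 0, and let u be a strictly positive regular solution of -(u'/√(1+(u')²))' = λ a f(u) with u'(0)=u'(1)=0 and u decreasing. If f is C¹ and decreasing on [M, ∞) and u(x) ≥ M for all x ∈ [0,1], then ∫₀¹ a(x) dx ≥ 0. Consequently, if ∫₀¹ a < 0, then u(1) < M. -/
open Filter Set MeasureTheory

theorem stmt13 (a f : ℝ → ℝ) (lam z M : ℝ) (u u' : ℝ → ℝ)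
    (hz : z ∈ Ioo (0:ℝ) 1)
    (habd : ∃ C, ∀ᵐ x ∂(volume.restrict (Ioo (0:ℝ) 1)), |a x| ≤ C)
    (hapos : ∀ᵐ x ∂(volume.restrict (Ioo (0:ℝ) z)), 0 < a x)
    (haneg : ∀ᵐ x ∂(volume.restrict (Ioo z 1)), a x < 0)
    (hf : Continuous f) (hfpos : ∀ s > 0, 0 < f s)
    (hlam : 0 < lam)
    (hupos : ∀ x ∈ Icc (0:ℝ) 1, 0 < u x)
    (hdec : AntitoneOn u (Icc 0 1))
    (hderiv : ∀ x ∈ Icc (0:ℝ) 1, HasDerivAt u (u' x) x)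
    (hODE : ∀ᵐ x ∂(volume.restrict (Ioo (0:ℝ) 1)),
      HasDerivAt (fun y => u' y / Real.sqrt (1 + (u' y) ^ 2))
        (-(lam * a x * f (u x))) x)
    (hFTC : ∀ x ∈ Icc (0:ℝ) 1,
      u' x / Real.sqrt (1 + (u' x) ^ 2)
        = u' 0 / Real.sqrt (1 + (u' 0) ^ 2) - lam * ∫ t in (0:ℝ)..x, a t * f (u t))
    (hbc0 : u' 0 = 0) (hbc1 : u' 1 = 0)
    (hfC1 : ContDiffOn ℝ 1 f (Ici M))
    (hfdec : AntitoneOn f (Ici M)) :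
    ((∀ x ∈ Icc (0:ℝ) 1, M ≤ u x) → 0 ≤ ∫ x in (0:ℝ)..1, a x) ∧
    ((∫ x in (0:ℝ)..1, a x) < 0 → u 1 < M) := by
  have hzIcc : z ∈ Icc (0:ℝ) 1 := ⟨hz.1.le, hz.2.le⟩
  -- ∫₀¹ a f(u) = 0 from FTC and boundary conditions
  have hI : (∫ t in (0:ℝ)..1, a t * f (u t)) = 0 := by
    have h1 := hFTC 1 (by norm_num)
    rw [hbc0, hbc1] at h1
    simp only [zero_div, zero_sub] at h1
    have h2 : lam * ∫ t in (0:ℝ)..1, a t * f (u t) = 0 := by linarith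
    exact (mul_eq_zero.mp h2).resolve_left hlam.ne'
  have key : (∀ x ∈ Icc (0:ℝ) 1, M ≤ u x) → 0 ≤ ∫ x in (0:ℝ)..1, a x := by
    intro hM
    by_cases ha : IntervalIntegrable a volume 0 1
    · set c := f (u z) with hc
      have hcpos : 0 < c := hfpos _ (hupos z hzIcc)
      -- continuity of f ∘ u on [0,1]
      have hu_cont : ContinuousOn u (Icc 0 1) := fun x hx =>
        (hderiv x hx).continuousAt.continuousWithinAt
      have hfu_cont : ContinuousOn (fun x => f (u x)) (uIcc (0:ℝ) 1) := by
        rw [uIcc_of_le (by norm_num : (0:ℝ) ≤ 1)]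
        exact hf.comp_continuousOn hu_cont
      have hafu : IntervalIntegrable (fun x => a x * f (u x)) volume 0 1 :=
        ha.mul_continuousOn hfu_cont
      have hca : IntervalIntegrable (fun x => c * a x) volume 0 1 := ha.const_mul c
      -- a.e. pointwise inequality
      have h1 := (ae_restrict_iff' measurableSet_Ioo).mp hapos
      have h2 := (ae_restrict_iff' measurableSet_Ioo).mp haneg
      have h3 : ∀ᵐ x : ℝ, x ≠ z := by
        refine ae_iff.mpr ?_
        simpa using Real.volume_singleton (a := z)
      have h4 : ∀ᵐ x : ℝ, x ≠ (1:ℝ) := by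
        refine ae_iff.mpr ?_
        simpa using Real.volume_singleton (a := (1:ℝ))
      have h5 : ∀ᵐ x : ℝ, x ≠ (0:ℝ) := by
        refine ae_iff.mpr ?_
        simpa using Real.volume_singleton (a := (0:ℝ))
      have hae : ∀ᵐ x ∂(volume.restrict (Icc (0:ℝ) 1)),
          0 ≤ c * a x - a x * f (u x) := by
        rw [ae_restrict_iff' measurableSet_Icc]
        filter_upwards [h1, h2, h3, h4, h5] with x hx1 hx2 hxz hxone hxzero hxIcc
        have hx : 0 < x := lt_of_le_of_ne hxIcc.1 (Ne.symm hxzero)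
        rcases lt_trichotomy x z with h | h | h
        · have apos : 0 < a x := hx1 ⟨hx, h⟩
          have hle : u z ≤ u x := hdec hxIcc hzIcc h.le
          have hfz : f (u x) ≤ c := hfdec (hM z hzIcc) (hM x hxIcc) hle
          nlinarith [mul_nonneg apos.le (sub_nonneg.mpr hfz)]
        · exact absurd h hxz
        · have hxlt1 : x < 1 := lt_of_le_of_ne hxIcc.2 hxone
          have aneg : a x < 0 := hx2 ⟨h, hxlt1⟩
          have hle : u x ≤ u z := hdec hzIcc hxIcc h.le
          have hfz : c ≤ f (u x) := hfdec (hM x hxIcc) (hM z hzIcc) hle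
          nlinarith [mul_nonneg (neg_nonneg.mpr aneg.le) (neg_nonneg.mpr (sub_nonpos.mpr hfz))]
      have h0 : 0 ≤ ∫ x in (0:ℝ)..1, (c * a x - a x * f (u x)) :=
        intervalIntegral.integral_nonneg_of_ae_restrict (by norm_num) hae
      rw [intervalIntegral.integral_sub hca hafu, hI,
        intervalIntegral.integral_const_mul, sub_zero] at h0
      exact nonneg_of_mul_nonneg_right h0 hcpos
    · rw [intervalIntegral.integral_undef ha]
  refine ⟨key, fun hneg => ?_⟩
  by_contra h
  push_neg at h
  have hM : ∀ x ∈ Icc (0:ℝ) 1, M ≤ u x := fun x hx =>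
    h.trans (hdec hx (by norm_num) hx.2)
  exact absurd (key hM) (not_le.mpr hneg)
end

section
/- Let p ∈ (0,1), z ∈ (0,1), a ∈ L^∞(0,1) with a > 0 a.e. on (0,z) and a < 0 a.e. on (z,1), and let μ₁ > 0 be the principal eigenvalue of -φ'' = μ a φ on (0,z) with Dirichlet conditions φ(0)=φ(z)=0, with positive eigenfunction φ₁. Choose c > 0 with μ₁ (c φ₁(x))^{1-p} ≤ 1 for all x ∈ [0,z], and define α(x) = c φ₁(x) for 0 ≤ x ≤ z and α(x) = c φ₁'(z)(x - z) for z < x ≤ 1. Then α ∈ W^{2,∞}(0,1), α'(0) > 0 > α'(1), and -α''(x) ≤ a(x)|α(x)|^p sgn(α(x)) a.e. in (0,1); i.e., α is a subsolution of -v'' = a |v|^p sgn v with Neumann conditions. -/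
/-!
On `[0, z]` the function `α = c φ₁` satisfies `-α'' = μ₁ a α = a (μ₁ α^(1-p)) α^p ≤ a α^p`,
because `a > 0` there and `μ₁ α^(1-p) ≤ 1` by the choice of `c`. On `(z, 1]`, `α` is the tangent
line at `z`: it is negative, `α'' = 0`, and `a < 0` makes the right-hand side positive. Since
`φ₁ z = 0`, the two pieces glue to a `C¹` function. Finally, `φ₁'' = -μ₁ a φ₁` is only essentially
bounded, so `φ₁'` is Lipschitz by the fundamental theorem of calculus, and this bounds its
derivative `φ₁''` at every point.
-/

open Filter Set MeasureTheory Topology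

section PiecewiseDeriv

variable {E : Type*} [NormedAddCommGroup E] [NormedSpace ℝ E] {f g : ℝ → E} {f' g' : E}
  {x z : ℝ}

theorem hasDerivAt_ite_le_of_lt (hx : x < z) (hf : HasDerivAt f f' x) :
    HasDerivAt (fun t => if t ≤ z then f t else g t) f' x :=
  hf.congr_of_eventuallyEq <| (eventually_lt_nhds hx).mono fun _ ht => if_pos ht.le

theorem hasDerivAt_ite_le_of_gt (hx : z < x) (hg : HasDerivAt g g' x) :
    HasDerivAt (fun t => if t ≤ z then f t else g t) g' x :=
  hg.congr_of_eventuallyEq <| (eventually_gt_nhds hx).mono fun _ ht => if_neg ht.not_ge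

theorem hasDerivAt_ite_le_self (hf : HasDerivAt f f' z) (hg : HasDerivAt g f' z)
    (hfg : f z = g z) : HasDerivAt (fun t => if t ≤ z then f t else g t) f' z := by
  have hleft : HasDerivWithinAt (fun t => if t ≤ z then f t else g t) f' (Iic z) z :=
    hf.hasDerivWithinAt.congr (fun _ ht => if_pos ht) (if_pos le_rfl)
  have hright : HasDerivWithinAt (fun t => if t ≤ z then f t else g t) f' (Ici z) z := by
    refine hg.hasDerivWithinAt.congr (fun t ht => ?_) (by simp [hfg])
    rcases (mem_Ici.1 ht).eq_or_lt with rfl | h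
    · simp [hfg]
    · exact if_neg h.not_ge
  simpa [Iic_union_Ici] using hleft.union hright

end PiecewiseDeriv

section DerivBound

variable {E : Type*} [NormedAddCommGroup E] [NormedSpace ℝ E]

theorem norm_sub_le_of_hasDerivAt_of_ae_norm_le [CompleteSpace E] {f f' : ℝ → E} {u v K : ℝ}
    (huv : u ≤ v) (hf : ∀ x ∈ Icc u v, HasDerivAt f (f' x) x)
    (hK : ∀ᵐ x ∂volume.restrict (Ioo u v), ‖f' x‖ ≤ K) :
    ‖f v - f u‖ ≤ K * (v - u) := by
  rw [restrict_Ioo_eq_restrict_Ioc] at hK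
  have hf'_eq : f' =ᵐ[volume.restrict (Ioc u v)] deriv f :=
    (ae_restrict_mem measurableSet_Ioc).mono fun x hx => (hf x (Ioc_subset_Icc_self hx)).deriv.symm
  have hint : IntervalIntegrable f' volume u v :=
    (intervalIntegrable_iff_integrableOn_Ioc_of_le huv).2 <| IntegrableOn.of_bound
      measure_Ioc_lt_top ((aestronglyMeasurable_deriv f _).congr hf'_eq.symm) K hK
  rw [← intervalIntegral.integral_eq_sub_of_hasDerivAt (by rwa [uIcc_of_le huv]) hint,
    ← abs_of_nonneg (sub_nonneg.2 huv)]
  refine intervalIntegral.norm_integral_le_of_norm_le_const_ae ?_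
  rw [uIoc_of_le huv]
  exact (ae_restrict_iff' measurableSet_Ioc).1 hK

theorem HasDerivWithinAt.norm_le_of_norm_sub_le {f : ℝ → E} {f' : E} {s : Set ℝ} {x K : ℝ}
    [(𝓝[s] x).NeBot] (hf : HasDerivWithinAt f f' s x) (hx : x ∉ s)
    (hK : ∀ᶠ y in 𝓝[s] x, ‖f y - f x‖ ≤ K * |y - x|) : ‖f'‖ ≤ K := by
  refine le_of_tendsto ((hasDerivWithinAt_iff_tendsto_slope' hx).1 hf).norm ?_
  filter_upwards [hK, self_mem_nhdsWithin] with y hy hys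
  have hyx : 0 < |y - x| := abs_pos.2 (sub_ne_zero.2 (ne_of_mem_of_not_mem hys hx))
  rw [slope_def_module, norm_smul, norm_inv, Real.norm_eq_abs, inv_mul_le_iff₀ hyx, mul_comm]
  exact hy

theorem norm_le_of_hasDerivAt_of_ae_norm_le [CompleteSpace E] {f f' : ℝ → E} {a b K : ℝ}
    (hab : a < b) (hf : ∀ x ∈ Icc a b, HasDerivAt f (f' x) x)
    (hK : ∀ᵐ x ∂volume.restrict (Ioo a b), ‖f' x‖ ≤ K) {x : ℝ} (hx : x ∈ Icc a b) :
    ‖f' x‖ ≤ K := by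
  have hlip : ∀ u ∈ Icc a b, ∀ v ∈ Icc a b, u ≤ v → ‖f v - f u‖ ≤ K * (v - u) :=
    fun u hu v hv huv => norm_sub_le_of_hasDerivAt_of_ae_norm_le huv
      (fun y hy => hf y ⟨hu.1.trans hy.1, hy.2.trans hv.2⟩)
      (ae_restrict_of_ae_restrict_of_subset (Ioo_subset_Ioo hu.1 hv.2) hK)
  rcases hx.2.lt_or_eq with hxb | rfl
  · refine (hf x hx).hasDerivWithinAt.norm_le_of_norm_sub_le (s := Ioi x) (lt_irrefl x) ?_
    filter_upwards [Ioo_mem_nhdsGT hxb] with y hy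
    rw [abs_of_pos (sub_pos.2 hy.1)]
    exact hlip x hx y ⟨hx.1.trans hy.1.le, hy.2.le⟩ hy.1.le
  · refine (hf x hx).hasDerivWithinAt.norm_le_of_norm_sub_le (s := Iio x) (lt_irrefl x) ?_
    filter_upwards [Ioo_mem_nhdsLT hab] with y hy
    rw [norm_sub_rev, abs_sub_comm, abs_of_pos (sub_pos.2 hy.2)]
    exact hlip y ⟨hy.1.le, hy.2.le⟩ x hx hy.2.le

end DerivBound

theorem exists_abs_le_of_ae_neg_eq_mul_weight {φ φ' φ'' w : ℝ → ℝ} {a b μ : ℝ} (hab : a < b)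
    (hw : ∃ C, ∀ᵐ x ∂volume.restrict (Ioo a b), |w x| ≤ C)
    (hφ : ∀ x ∈ Icc a b, HasDerivAt φ (φ' x) x)
    (hφ' : ∀ x ∈ Icc a b, HasDerivAt φ' (φ'' x) x)
    (heq : ∀ᵐ x ∂volume.restrict (Ioo a b), -φ'' x = μ * w x * φ x) :
    ∃ K, ∀ x ∈ Icc a b, |φ'' x| ≤ K := by
  obtain ⟨C, hC⟩ := hw
  obtain ⟨M, hM⟩ := isCompact_Icc.exists_bound_of_continuousOn
    fun x hx => (hφ x hx).continuousAt.continuousWithinAt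
  refine ⟨|μ| * C * M, fun x hx => ?_⟩
  refine norm_le_of_hasDerivAt_of_ae_norm_le hab hφ' ?_ hx
  filter_upwards [hC, heq, ae_restrict_mem measurableSet_Ioo] with y hCy heqy hy
  rw [Real.norm_eq_abs, ← abs_neg, heqy, abs_mul, abs_mul]
  have hMy : |φ y| ≤ M := hM y (Ioo_subset_Icc_self hy)
  have hC0 : 0 ≤ C := (abs_nonneg _).trans hCy
  exact mul_le_mul (mul_le_mul_of_nonneg_left hCy (abs_nonneg μ)) hMy (abs_nonneg _)
    (by positivity)

theorem mul_le_rpow_of_mul_rpow_one_sub_le_one {y μ p : ℝ} (hy : 0 < y)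
    (h : μ * y ^ (1 - p) ≤ 1) : μ * y ≤ y ^ p := by
  have hsplit : y ^ (1 - p) * y ^ p = y := by
    rw [← Real.rpow_add hy, sub_add_cancel, Real.rpow_one]
  calc μ * y = μ * y ^ (1 - p) * y ^ p := by rw [mul_assoc, hsplit]
    _ ≤ 1 * y ^ p := by gcongr
    _ = y ^ p := one_mul _

section Extension

variable {f f' : ℝ → ℝ} {l x z : ℝ}

theorem hasDerivAt_ite_le_tangent (hf : ∀ y ∈ Icc l z, HasDerivAt f (f' y) y) (hfz : f z = 0)
    (hlz : l < z) (hx : l ≤ x) :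
    HasDerivAt (fun t => if t ≤ z then f t else f' z * (t - z))
      (if x ≤ z then f' x else f' z) x := by
  have hlin : HasDerivAt (fun t => f' z * (t - z)) (f' z) x := by
    simpa using ((hasDerivAt_id x).sub_const z).const_mul (f' z)
  rcases lt_trichotomy x z with h | rfl | h
  · simpa only [if_pos h.le] using hasDerivAt_ite_le_of_lt h (hf x ⟨hx, h.le⟩)
  · simpa only [if_pos le_rfl] using
      hasDerivAt_ite_le_self (hf x ⟨hlz.le, le_rfl⟩) hlin (by simp [hfz])
  · simpa only [if_neg h.not_ge] using hasDerivAt_ite_le_of_gt h hlin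

theorem hasDerivAt_ite_le_const (hf : ∀ y ∈ Icc l z, HasDerivAt f (f' y) y) (hx : l ≤ x)
    (hxz : x ≠ z) :
    HasDerivAt (fun t => if t ≤ z then f t else f z) (if x ≤ z then f' x else 0) x := by
  rcases hxz.lt_or_gt with h | h
  · simpa only [if_pos h.le] using hasDerivAt_ite_le_of_lt h (hf x ⟨hx, h.le⟩)
  · simpa only [if_neg h.not_ge] using hasDerivAt_ite_le_of_gt h (hasDerivAt_const x _)

end Extension

theorem neg_mul_le_mul_rpow_mul_sign_of_neg_eq {w φ φ'' μ c p : ℝ} (hw : 0 ≤ w)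
    (hcφ : 0 < c * φ) (heq : -φ'' = μ * w * φ) (hsmall : μ * (c * φ) ^ (1 - p) ≤ 1) :
    -(c * φ'') ≤ w * |c * φ| ^ p * Real.sign (c * φ) := by
  rw [abs_of_pos hcφ, Real.sign_of_pos hcφ, mul_one]
  calc -(c * φ'') = w * (μ * (c * φ)) := by linear_combination c * heq
    _ ≤ w * (c * φ) ^ p :=
      mul_le_mul_of_nonneg_left (mul_le_rpow_of_mul_rpow_one_sub_le_one hcφ hsmall) hw

theorem mul_rpow_mul_sign_nonneg_of_nonpos_of_neg {w y : ℝ} (p : ℝ) (hw : w ≤ 0)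
    (hy : y < 0) :
    0 ≤ w * |y| ^ p * Real.sign y := by
  rw [Real.sign_of_neg hy, mul_neg_one, neg_nonneg]
  exact mul_nonpos_of_nonpos_of_nonneg hw (Real.rpow_nonneg (abs_nonneg y) p)

theorem stmt15_general (a : ℝ → ℝ) (p z μ₁ c : ℝ) (φ₁ φ₁' φ₁'' : ℝ → ℝ)
    (hz : z ∈ Ioo (0:ℝ) 1)
    (habd : ∃ C, ∀ᵐ x ∂(volume.restrict (Ioo (0:ℝ) 1)), |a x| ≤ C)
    (hapos : ∀ᵐ x ∂(volume.restrict (Ioo (0:ℝ) z)), 0 < a x)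
    (haneg : ∀ᵐ x ∂(volume.restrict (Ioo z 1)), a x < 0)
    (hd1 : ∀ x ∈ Icc (0:ℝ) z, HasDerivAt φ₁ (φ₁' x) x)
    (hd2 : ∀ x ∈ Icc (0:ℝ) z, HasDerivAt φ₁' (φ₁'' x) x)
    (heig : ∀ᵐ x ∂(volume.restrict (Ioo (0:ℝ) z)),
      -φ₁'' x = μ₁ * a x * φ₁ x)
    (hφbc : φ₁ 0 = 0 ∧ φ₁ z = 0)
    (hφpos : ∀ x ∈ Ioo (0:ℝ) z, 0 < φ₁ x)
    (hφ'0 : 0 < φ₁' 0) (hφ'z : φ₁' z < 0)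
    (hcpos : 0 < c)
    (hcsmall : ∀ x ∈ Icc (0:ℝ) z, μ₁ * (c * φ₁ x) ^ (1 - p) ≤ 1) :
    let α : ℝ → ℝ := fun x => if x ≤ z then c * φ₁ x else c * φ₁' z * (x - z)
    let α' : ℝ → ℝ := fun x => if x ≤ z then c * φ₁' x else c * φ₁' z
    let α'' : ℝ → ℝ := fun x => if x ≤ z then c * φ₁'' x else 0
    (∀ x ∈ Icc (0:ℝ) 1, HasDerivAt α (α' x) x) ∧
    0 < α' 0 ∧ α' 1 < 0 ∧
    (∀ x ∈ Icc (0:ℝ) 1, x ≠ z → HasDerivAt α' (α'' x) x) ∧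
    (∃ C, ∀ x ∈ Icc (0:ℝ) 1, |α'' x| ≤ C) ∧
    (∀ᵐ x ∂(volume.restrict (Ioo (0:ℝ) 1)),
      -α'' x ≤ a x * |α x| ^ p * Real.sign (α x)) := by
  intro α α' α''
  obtain ⟨hz0, hz1⟩ := hz
  have hcd1 (x) (hx : x ∈ Icc 0 z) := (hd1 x hx).const_mul c
  have hcd2 (x) (hx : x ∈ Icc 0 z) := (hd2 x hx).const_mul c
  obtain ⟨K, hK⟩ := exists_abs_le_of_ae_neg_eq_mul_weight hz0 (habd.imp fun _ =>
    ae_restrict_of_ae_restrict_of_subset (Ioo_subset_Ioo_right hz1.le)) hd1 hd2 heig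
  refine ⟨fun x hx => hasDerivAt_ite_le_tangent hcd1 (by simp [hφbc.2]) hz0 hx.1,
    by simpa [α', hz0.le] using mul_pos hcpos hφ'0,
    by simpa [α', hz1.not_ge] using mul_neg_of_pos_of_neg hcpos hφ'z,
    fun x hx hxz => hasDerivAt_ite_le_const hcd2 hx.1 hxz, ⟨|c| * K, fun x hx => ?_⟩, ?_⟩
  · by_cases h : x ≤ z
    · simpa [α'', h, abs_mul] using mul_le_mul_of_nonneg_left (hK x ⟨hx.1, h⟩) (abs_nonneg c)
    · simpa [α'', h] using
        mul_nonneg (abs_nonneg c) ((abs_nonneg _).trans (hK 0 ⟨le_rfl, hz0.le⟩))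
  · rw [ae_restrict_iff' measurableSet_Ioo]
    filter_upwards [ae_imp_of_ae_restrict hapos, ae_imp_of_ae_restrict haneg,
      ae_imp_of_ae_restrict heig, compl_mem_ae_iff.2 (measure_singleton z)]
      with x hpos hneg hx_eig hxz hx
    rcases (show x ≠ z from hxz).lt_or_gt with h | h
    · simpa only [α, α'', if_pos h.le] using
        neg_mul_le_mul_rpow_mul_sign_of_neg_eq (hpos ⟨hx.1, h⟩).le
          (mul_pos hcpos (hφpos x ⟨hx.1, h⟩)) (hx_eig ⟨hx.1, h⟩) (hcsmall x ⟨hx.1.le, h.le⟩)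
    · simpa only [α, α'', if_neg h.not_ge, neg_zero] using
        mul_rpow_mul_sign_nonneg_of_nonpos_of_neg p (hneg ⟨h, hx.2⟩).le
          (mul_neg_of_neg_of_pos (mul_neg_of_pos_of_neg hcpos hφ'z) (sub_pos.2 h))

theorem stmt15 (a : ℝ → ℝ) (p z μ₁ c : ℝ) (φ₁ φ₁' φ₁'' : ℝ → ℝ)
    (hp : p ∈ Ioo (0:ℝ) 1) (hz : z ∈ Ioo (0:ℝ) 1)
    (habd : ∃ C, ∀ᵐ x ∂(volume.restrict (Ioo (0:ℝ) 1)), |a x| ≤ C)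
    (hapos : ∀ᵐ x ∂(volume.restrict (Ioo (0:ℝ) z)), 0 < a x)
    (haneg : ∀ᵐ x ∂(volume.restrict (Ioo z 1)), a x < 0)
    (hμ₁ : 0 < μ₁)
    (hd1 : ∀ x ∈ Icc (0:ℝ) z, HasDerivAt φ₁ (φ₁' x) x)
    (hd2 : ∀ x ∈ Icc (0:ℝ) z, HasDerivAt φ₁' (φ₁'' x) x)
    (hc : ContinuousOn φ₁' (Icc 0 z))
    (heig : ∀ᵐ x ∂(volume.restrict (Ioo (0:ℝ) z)),
      -φ₁'' x = μ₁ * a x * φ₁ x)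
    (hφbc : φ₁ 0 = 0 ∧ φ₁ z = 0)
    (hφpos : ∀ x ∈ Ioo (0:ℝ) z, 0 < φ₁ x)
    (hφ'0 : 0 < φ₁' 0) (hφ'z : φ₁' z < 0)
    (hcpos : 0 < c)
    (hcsmall : ∀ x ∈ Icc (0:ℝ) z, μ₁ * (c * φ₁ x) ^ (1 - p) ≤ 1) :
    let α : ℝ → ℝ := fun x => if x ≤ z then c * φ₁ x else c * φ₁' z * (x - z)
    let α' : ℝ → ℝ := fun x => if x ≤ z then c * φ₁' x else c * φ₁' z
    let α'' : ℝ → ℝ := fun x => if x ≤ z then c * φ₁'' x else 0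
    (∀ x ∈ Icc (0:ℝ) 1, HasDerivAt α (α' x) x) ∧
    0 < α' 0 ∧ α' 1 < 0 ∧
    (∀ x ∈ Icc (0:ℝ) 1, x ≠ z → HasDerivAt α' (α'' x) x) ∧
    (∃ C, ∀ x ∈ Icc (0:ℝ) 1, |α'' x| ≤ C) ∧
    (∀ᵐ x ∂(volume.restrict (Ioo (0:ℝ) 1)),
      -α'' x ≤ a x * |α x| ^ p * Real.sign (α x)) :=
  stmt15_general a p z μ₁ c φ₁ φ₁' φ₁'' hz habd hapos haneg hd1 hd2 heig hφbc hφpos hφ'0 hφ'z hcpos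
    hcsmall
end

section
/- Let {v_n} ⊂ C²[0,1] be positive solutions of -v_n'' = μ_n v_n + a(x) v_n^p with v_n'(0)=v_n'(1)=0, where p > 1, a ∈ L^∞(0,1), μ_n → 0 and ‖v_n‖_∞ → 0, and suppose v_n/‖v_n‖_∞ → 1 in C¹[0,1]. Then μ_n/‖v_n‖_∞^{p-1} → -∫₀¹ a(x) dx; in particular, if ∫₀¹ a < 0, then μ_n > 0 for all large n. -/
/-!
Integrating the equation over `[0, 1]`, the Neumann conditions kill `∫ v''`, so
`μ ∫ v = -∫ a v^p`. Dividing by `M^p`, with `w = v / M`, gives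
`μ / M^(p-1) * ∫ w = -∫ a w^p`; since `w → 1` uniformly, dominated convergence sends
`∫ w` to `1` and `∫ a w^p` to `∫ a`.
-/

open Filter Set MeasureTheory Topology

theorem IsCompact.le_ciSup_of_continuousOn {X α : Type*} [TopologicalSpace X]
    [ConditionallyCompleteLinearOrder α] [TopologicalSpace α] [ClosedIciTopology α]
    {K : Set X} {f : X → α} (hK : IsCompact K) (hf : ContinuousOn f K) {x : X} (hx : x ∈ K) :
    f x ≤ ⨆ y : K, f y :=
  haveI : Nonempty α := ⟨f x⟩
  le_ciSup (by simpa only [image_eq_range] using hK.bddAbove_image hf) (⟨x, hx⟩ : K)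

theorem integral_Ioo_eq_zero_of_neumann {l r : ℝ} (hlr : l ≤ r) {u' u'' g : ℝ → ℝ}
    (hd : ∀ x ∈ Icc l r, HasDerivAt u' (u'' x) x) (hg : IntegrableOn g (Ioo l r))
    (heq : ∀ᵐ x ∂volume.restrict (Ioo l r), -u'' x = g x) (hl : u' l = 0) (hr : u' r = 0) :
    ∫ x in Ioo l r, g x = 0 := by
  have hae : u'' =ᵐ[volume.restrict (Ioo l r)] fun x => -g x := by
    filter_upwards [heq] with x hx
    linarith
  have hint : IntervalIntegrable u'' volume l r := by
    rw [intervalIntegrable_iff_integrableOn_Ioo_of_le hlr]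
    exact hg.neg.congr_fun_ae hae.symm
  have hftc : ∫ x in l..r, u'' x = 0 := by
    rw [intervalIntegral.integral_eq_sub_of_hasDerivAt (fun x hx => hd x (uIcc_of_le hlr ▸ hx))
      hint, hl, hr, sub_zero]
  rw [intervalIntegral.integral_of_le hlr, integral_Ioc_eq_integral_Ioo, integral_congr_ae hae,
    integral_neg, neg_eq_zero] at hftc
  exact hftc

theorem mul_integral_eq_neg_integral_of_neumann {l r : ℝ} (hlr : l ≤ r) {a v v' v'' : ℝ → ℝ}
    {μ p : ℝ} (ha : IntegrableOn a (Ioo l r)) (hv : ∀ x ∈ Icc l r, 0 < v x)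
    (hd1 : ∀ x ∈ Icc l r, HasDerivAt v (v' x) x) (hd2 : ∀ x ∈ Icc l r, HasDerivAt v' (v'' x) x)
    (heq : ∀ᵐ x ∂volume.restrict (Ioo l r), -v'' x = μ * v x + a x * v x ^ p)
    (hl : v' l = 0) (hr : v' r = 0) :
    μ * ∫ x in Ioo l r, v x = -∫ x in Ioo l r, a x * v x ^ p := by
  have hcont : ContinuousOn v (Icc l r) := fun x hx => (hd1 x hx).continuousAt.continuousWithinAt
  have hint_v : IntegrableOn v (Ioo l r) := hcont.integrableOn_Icc.mono_set Ioo_subset_Icc_self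
  have hint_avp : IntegrableOn (fun x => a x * v x ^ p) (Ioo l r) :=
    ((by rwa [integrableOn_Icc_iff_integrableOn_Ioo] : IntegrableOn a (Icc l r)).mul_continuousOn
      (hcont.rpow_const fun x hx => Or.inl (hv x hx).ne') isCompact_Icc).mono_set
      Ioo_subset_Icc_self
  have hint : IntegrableOn (fun x => μ * v x + a x * v x ^ p) (Ioo l r) :=
    (hint_v.const_mul μ).add hint_avp
  have h := integral_Ioo_eq_zero_of_neumann hlr hd2 hint heq hl hr
  rw [integral_add (hint_v.const_mul μ) hint_avp, integral_const_mul] at h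
  linarith

theorem mul_integral_div_eq_neg_integral_div_rpow {X : Type*} [MeasurableSpace X] {ν : Measure X}
    {s : Set X} (hs : MeasurableSet s) {a v : X → ℝ} {μ p M : ℝ} (hM : 0 < M)
    (hv : ∀ x ∈ s, 0 ≤ v x) (h : μ * ∫ x in s, v x ∂ν = -∫ x in s, a x * v x ^ p ∂ν) :
    μ / M ^ (p - 1) * ∫ x in s, v x / M ∂ν = -∫ x in s, a x * (v x / M) ^ p ∂ν := by
  have hscale : ∫ x in s, a x * (v x / M) ^ p ∂ν = (∫ x in s, a x * v x ^ p ∂ν) / M ^ p := by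
    rw [← integral_div]
    refine setIntegral_congr_fun hs fun x hx => ?_
    rw [Real.div_rpow (hv x hx) hM.le, mul_div_assoc]
  rw [hscale, integral_div, Real.rpow_sub_one hM.ne', ← neg_div, ← h]
  have := (Real.rpow_pos_of_pos hM p).ne'
  field_simp

theorem tendsto_integral_mul_rpow_of_tendstoUniformlyOn {X : Type*} [MeasurableSpace X]
    {ν : Measure X} {s : Set X} (hs : MeasurableSet s) {a : X → ℝ} {f : ℕ → X → ℝ} {p : ℝ}
    (hp : 0 ≤ p) (ha : IntegrableOn a s ν) (hf : ∀ n, AEStronglyMeasurable (f n) (ν.restrict s))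
    (hf0 : ∀ n, ∀ x ∈ s, 0 ≤ f n x) (hlim : TendstoUniformlyOn f 1 atTop s) :
    Tendsto (fun n => ∫ x in s, a x * f n x ^ p ∂ν) atTop (𝓝 (∫ x in s, a x ∂ν)) := by
  have hbound : ∀ᶠ n in atTop, ∀ x ∈ s, f n x ≤ 2 := by
    filter_upwards [Metric.tendstoUniformlyOn_iff.1 hlim 1 one_pos] with n hn x hx
    have := hn x hx
    rw [Pi.one_apply, Real.dist_eq, abs_lt] at this
    linarith
  refine tendsto_integral_filter_of_dominated_convergence (fun x => |a x| * 2 ^ p)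
    (Eventually.of_forall fun n => ha.aestronglyMeasurable.mul
      ((Real.continuous_rpow_const hp).comp_aestronglyMeasurable (hf n)))
    ?_ (ha.abs.mul_const _) ?_
  · filter_upwards [hbound] with n hn
    filter_upwards [ae_restrict_mem hs] with x hx
    rw [Real.norm_eq_abs, abs_mul, abs_of_nonneg (Real.rpow_nonneg (hf0 n x hx) p)]
    exact mul_le_mul_of_nonneg_left (Real.rpow_le_rpow (hf0 n x hx) (hn x hx) hp) (abs_nonneg _)
  · filter_upwards [ae_restrict_mem hs] with x hx
    simpa using tendsto_const_nhds.mul ((hlim.tendsto_at hx).rpow_const (Or.inr hp))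

theorem stmt17_general (a : ℝ → ℝ) (p : ℝ) (μ : ℕ → ℝ) (v v' v'' : ℕ → ℝ → ℝ)
    (hp : 1 < p)
    (haint : IntegrableOn a (Ioo 0 1) volume)
    (hd1 : ∀ n, ∀ x ∈ Icc (0:ℝ) 1, HasDerivAt (v n) (v' n x) x)
    (hd2 : ∀ n, ∀ x ∈ Icc (0:ℝ) 1, HasDerivAt (v' n) (v'' n x) x)
    (heq : ∀ n, ∀ᵐ x ∂(volume.restrict (Ioo (0:ℝ) 1)),
      -v'' n x = μ n * v n x + a x * v n x ^ p)
    (hbc : ∀ n, v' n 0 = 0 ∧ v' n 1 = 0)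
    (hpos : ∀ n, ∀ x ∈ Icc (0:ℝ) 1, 0 < v n x)
    (M : ℕ → ℝ) (hM : ∀ n, M n = ⨆ x : Icc (0:ℝ) 1, v n ↑x)
    (hunif : TendstoUniformlyOn (fun n x => v n x / M n) 1 atTop (Icc 0 1)) :
    Tendsto (fun n => μ n / M n ^ (p - 1)) atTop
      (nhds (-∫ x in (0:ℝ)..1, a x)) ∧
    ((∫ x in (0:ℝ)..1, a x) < 0 → ∀ᶠ n in atTop, 0 < μ n) := by
  have hcont : ∀ n, ContinuousOn (v n) (Icc 0 1) := fun n x hx =>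
    (hd1 n x hx).continuousAt.continuousWithinAt
  have hMpos : ∀ n, 0 < M n := fun n =>
    (hpos n 0 (left_mem_Icc.2 zero_le_one)).trans_le
      (hM n ▸ isCompact_Icc.le_ciSup_of_continuousOn (hcont n) (left_mem_Icc.2 zero_le_one))
  have hscaled : ∀ n, μ n / M n ^ (p - 1) * ∫ x in Ioo (0:ℝ) 1, v n x / M n
      = -∫ x in Ioo (0:ℝ) 1, a x * (v n x / M n) ^ p := fun n =>
    mul_integral_div_eq_neg_integral_div_rpow measurableSet_Ioo (hMpos n)
      (fun x hx => (hpos n x (Ioo_subset_Icc_self hx)).le)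
      (mul_integral_eq_neg_integral_of_neumann zero_le_one haint (hpos n) (hd1 n) (hd2 n) (heq n)
        (hbc n).1 (hbc n).2)
  have hmeas : ∀ n, AEStronglyMeasurable (fun x => v n x / M n) (volume.restrict (Ioo 0 1)) :=
    fun n => (((hcont n).mono Ioo_subset_Icc_self).div_const (M n)).aestronglyMeasurable
      measurableSet_Ioo
  have hnonneg : ∀ n, ∀ x ∈ Ioo (0:ℝ) 1, 0 ≤ v n x / M n := fun n x hx =>
    div_nonneg (hpos n x (Ioo_subset_Icc_self hx)).le (hMpos n).le
  have hI : Tendsto (fun n => ∫ x in Ioo (0:ℝ) 1, v n x / M n) atTop (𝓝 1) := by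
    simpa using tendsto_integral_mul_rpow_of_tendstoUniformlyOn measurableSet_Ioo zero_le_one
      (integrableOn_const measure_Ioo_lt_top.ne (C := (1:ℝ))) hmeas hnonneg
      (hunif.mono Ioo_subset_Icc_self)
  have hJ := tendsto_integral_mul_rpow_of_tendstoUniformlyOn measurableSet_Ioo (by linarith) haint
    hmeas hnonneg (hunif.mono Ioo_subset_Icc_self)
  have hlim : Tendsto (fun n => μ n / M n ^ (p - 1)) atTop (𝓝 (-∫ x in (0:ℝ)..1, a x)) := by
    rw [intervalIntegral.integral_of_le zero_le_one, integral_Ioc_eq_integral_Ioo, ← div_one (-_)]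
    refine (hJ.neg.div hI one_ne_zero).congr' ?_
    filter_upwards [hI.eventually_ne one_ne_zero] with n hn
    rw [Pi.div_apply, ← hscaled n, mul_div_cancel_right₀ _ hn]
  refine ⟨hlim, fun hneg => ?_⟩
  filter_upwards [hlim.eventually (eventually_gt_nhds (neg_pos.2 hneg))] with n hn
  exact (div_pos_iff_of_pos_right (Real.rpow_pos_of_pos (hMpos n) _)).1 hn

theorem stmt17 (a : ℝ → ℝ) (p : ℝ) (μ : ℕ → ℝ) (v v' v'' : ℕ → ℝ → ℝ)
    (hp : 1 < p)
    (habd : ∃ C, ∀ᵐ x ∂(volume.restrict (Ioo (0:ℝ) 1)), |a x| ≤ C)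
    (haint : IntegrableOn a (Ioo 0 1) volume)
    (hd1 : ∀ n, ∀ x ∈ Icc (0:ℝ) 1, HasDerivAt (v n) (v' n x) x)
    (hd2 : ∀ n, ∀ x ∈ Icc (0:ℝ) 1, HasDerivAt (v' n) (v'' n x) x)
    (heq : ∀ n, ∀ᵐ x ∂(volume.restrict (Ioo (0:ℝ) 1)),
      -v'' n x = μ n * v n x + a x * v n x ^ p)
    (hbc : ∀ n, v' n 0 = 0 ∧ v' n 1 = 0)
    (hpos : ∀ n, ∀ x ∈ Icc (0:ℝ) 1, 0 < v n x)
    (M : ℕ → ℝ) (hM : ∀ n, M n = ⨆ x : Icc (0:ℝ) 1, v n ↑x)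
    (hμ0 : Tendsto μ atTop (nhds 0))
    (hM0 : Tendsto M atTop (nhds 0))
    (hunif : TendstoUniformlyOn (fun n x => v n x / M n) 1 atTop (Icc 0 1))
    (hunif' : TendstoUniformlyOn (fun n x => v' n x / M n) 0 atTop (Icc 0 1)) :
    Tendsto (fun n => μ n / M n ^ (p - 1)) atTop
      (nhds (-∫ x in (0:ℝ)..1, a x)) ∧
    ((∫ x in (0:ℝ)..1, a x) < 0 → ∀ᶠ n in atTop, 0 < μ n) :=
  stmt17_general a p μ v v' v'' hp haint hd1 hd2 heq hbc hpos M hM hunif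
end

section
/- Let u(x) = (1/144)(2/81 - x⁴) for 0 ≤ x ≤ 1/3, u(x) = (1/144)(x - 2/3)⁴ for 1/3 < x ≤ 2/3, and u(x) = 0 for 2/3 < x ≤ 1. Then u ∈ W^{2,∞}(0,1), u ≥ 0, u'(0) = u'(1) = 0, and u satisfies -(u'/√(1+(u')²))' = -a(x)√(u(x)) a.e. on (0,1), where a(x) = (u'/√(1+(u')²))' / √(u(x)) for x ∈ [0, 2/3)\{1/3} and a(x) = A on [2/3, 1] for any constant A ∈ ℝ; moreover a ∈ L^∞(0,1). -/
open Filter Set MeasureTheory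
open scoped NNReal

/-!
The profile is a quartic on `[0, 1/3]` and on `[1/3, 2/3]`, glued to `0` on `[2/3, 1]` with
matching values and first derivatives, so `u` is `C¹` and `u'` is piecewise cubic with
`|u''| ≤ 1/108` on `[-1/3, 1]`, hence Lipschitz. As `s ↦ s / √(1 + s²)` has derivative in
`(0, 1]`, the flux `g` satisfies `|g'| ≤ |u''|` where `u'` is differentiable and `|g'| ≤ 1/108`
on a neighbourhood of `[0, 1/3]`. Now `√u ≥ 1/108` on `[0, 1/3]`, while on `[1/3, 2/3]` one has
`√u = (x - 2/3)² / 12 = u''` exactly; hence `|a| ≤ 1` on `[0, 2/3)`. On `[2/3, 1]` both `u` and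
`g'` vanish, so the equation holds whatever the value `A` of `a` there.
-/

noncomputable section

theorem LipschitzOnWith.Icc_union_Icc {E : Type*} [PseudoMetricSpace E] {f : ℝ → E}
    {K : ℝ≥0} {a b c : ℝ} (h₁ : LipschitzOnWith K f (Icc a b))
    (h₂ : LipschitzOnWith K f (Icc b c)) :
    LipschitzOnWith K f (Icc a c) := by
  refine LipschitzOnWith.of_dist_le_mul fun x hx y hy => ?_
  wlog hxy : x ≤ y generalizing x y
  · rw [dist_comm, dist_comm x]
    exact this y hy x hx (le_of_not_ge hxy)
  rcases le_total y b with hyb | hby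
  · exact h₁.dist_le_mul x ⟨hx.1, hxy.trans hyb⟩ y ⟨hx.1.trans hxy, hyb⟩
  rcases le_total b x with hbx | hxb
  · exact h₂.dist_le_mul x ⟨hbx, hxy.trans hy.2⟩ y ⟨hby, hy.2⟩
  calc dist (f x) (f y) ≤ dist (f x) (f b) + dist (f b) (f y) := dist_triangle _ _ _
    _ ≤ K * dist x b + K * dist b y :=
      add_le_add (h₁.dist_le_mul x ⟨hx.1, hxb⟩ b ⟨hx.1.trans hxb, le_rfl⟩)
        (h₂.dist_le_mul b ⟨le_rfl, hby.trans hy.2⟩ y ⟨hby, hy.2⟩)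
    _ = K * dist x y := by
      rw [Real.dist_eq, Real.dist_eq, Real.dist_eq, abs_of_nonpos (by linarith),
        abs_of_nonpos (by linarith), abs_of_nonpos (by linarith)]
      ring

theorem hasDerivAt_ite_le {F : Type*} [NormedAddCommGroup F] [NormedSpace ℝ F]
    {p q p' q' : ℝ → F} {c x : ℝ} (hc : p c = q c) (hc' : p' c = q' c)
    (hp : x ≤ c → HasDerivAt p (p' x) x) (hq : c ≤ x → HasDerivAt q (q' x) x) :
    HasDerivAt (fun y => if y ≤ c then p y else q y) (if x ≤ c then p' x else q' x) x := by
  rcases lt_trichotomy x c with hxc | rfl | hcx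
  · rw [if_pos hxc.le]
    exact (hp hxc.le).congr_of_eventuallyEq
      (eventually_of_mem (Iio_mem_nhds hxc) fun y hy => if_pos (le_of_lt hy))
  · rw [if_pos le_rfl]
    have hleft : HasDerivWithinAt (fun y => if y ≤ x then p y else q y) (p' x) (Iic x) x :=
      (hp le_rfl).hasDerivWithinAt.congr (fun y hy => if_pos hy) (if_pos le_rfl)
    have hright : HasDerivWithinAt (fun y => if y ≤ x then p y else q y) (p' x) (Ici x) x := by
      rw [hc']
      refine (hq le_rfl).hasDerivWithinAt.congr (fun y hy => ?_) (by rw [if_pos le_rfl, hc])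
      split_ifs with hyx
      · rw [le_antisymm hyx hy, hc]
      · rfl
    simpa only [Iic_union_Ici, hasDerivWithinAt_univ] using hleft.union hright
  · rw [if_neg (not_le.2 hcx)]
    exact (hq hcx.le).congr_of_eventuallyEq
      (eventually_of_mem (Ioi_mem_nhds hcx) fun y hy => if_neg (not_le.2 hy))

def divSqrtOneAddSq (s : ℝ) : ℝ := s / √(1 + s ^ 2)

theorem hasDerivAt_divSqrtOneAddSq (t : ℝ) :
    HasDerivAt divSqrtOneAddSq (√(1 + t ^ 2) ^ 3)⁻¹ t := by
  have hpos : 0 < 1 + t ^ 2 := by positivity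
  have hsqrt : HasDerivAt (fun s : ℝ => √(1 + s ^ 2)) (t / √(1 + t ^ 2)) t := by
    have := (Real.hasDerivAt_sqrt hpos.ne').comp t (((hasDerivAt_id t).pow 2).const_add 1)
    refine this.congr_deriv ?_
    field_simp
    simp
  refine ((hasDerivAt_id t).div hsqrt (Real.sqrt_pos.2 hpos).ne').congr_deriv ?_
  have hsq : √(1 + t ^ 2) ^ 2 = 1 + t ^ 2 := Real.sq_sqrt hpos.le
  field_simp
  simp only [id]
  nlinarith [hsq]

theorem divSqrtOneAddSq_deriv_mem_Icc (t : ℝ) : (√(1 + t ^ 2) ^ 3)⁻¹ ∈ Icc (0 : ℝ) 1 :=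
  ⟨by positivity, inv_le_one_of_one_le₀ <| one_le_pow₀ <| Real.one_le_sqrt.2 <| by
    nlinarith [sq_nonneg t]⟩

theorem lipschitzWith_divSqrtOneAddSq : LipschitzWith 1 divSqrtOneAddSq :=
  lipschitzWith_of_nnnorm_deriv_le (fun t => (hasDerivAt_divSqrtOneAddSq t).differentiableAt)
    fun t => by
      rw [(hasDerivAt_divSqrtOneAddSq t).deriv, ← NNReal.coe_le_coe, coe_nnnorm,
        Real.norm_eq_abs, abs_of_nonneg (divSqrtOneAddSq_deriv_mem_Icc t).1]
      exact (divSqrtOneAddSq_deriv_mem_Icc t).2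

theorem abs_deriv_divSqrtOneAddSq_comp_le {f : ℝ → ℝ} {f' x : ℝ}
    (hf : HasDerivAt f f' x) : |deriv (fun y => divSqrtOneAddSq (f y)) x| ≤ |f'| := by
  have h : HasDerivAt (fun y => divSqrtOneAddSq (f y)) _ x :=
    (hasDerivAt_divSqrtOneAddSq (f x)).comp x hf
  rw [h.deriv, abs_mul, abs_of_nonneg (divSqrtOneAddSq_deriv_mem_Icc _).1]
  exact mul_le_of_le_one_left (abs_nonneg _) (divSqrtOneAddSq_deriv_mem_Icc _).2

namespace DeadCore

def profile (x : ℝ) : ℝ :=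
  if x ≤ 1/3 then (1/144) * (2/81 - x ^ 4)
  else if x ≤ 2/3 then (1/144) * (x - 2/3) ^ 4
  else 0

def profileDeriv (x : ℝ) : ℝ :=
  if x ≤ 1/3 then -(x ^ 3) / 36
  else if x ≤ 2/3 then (x - 2/3) ^ 3 / 36
  else 0

def flux (x : ℝ) : ℝ := divSqrtOneAddSq (profileDeriv x)

def coefficient (A x : ℝ) : ℝ := if x < 2/3 then deriv flux x / √(profile x) else A

theorem hasDerivAt_cube_sub_two_thirds_div (x : ℝ) :
    HasDerivAt (fun y : ℝ => (y - 2/3) ^ 3 / 36) ((x - 2/3) ^ 2 / 12) x := by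
  refine ((((hasDerivAt_id x).sub_const _).pow 3).div_const 36).congr_deriv ?_
  simp only [id]
  ring

theorem profile_of_le_one_third {x : ℝ} (hx : x ≤ 1/3) :
    profile x = (1/144) * (2/81 - x ^ 4) :=
  if_pos hx

theorem profile_of_mem_Icc {x : ℝ} (hx : x ∈ Icc (1/3 : ℝ) (2/3)) :
    profile x = (1/144) * (x - 2/3) ^ 4 := by
  rcases hx.1.eq_or_lt with rfl | h
  · norm_num [profile]
  · rw [profile, if_neg (not_le.2 h), if_pos hx.2]

theorem profile_of_two_thirds_le {x : ℝ} (hx : 2/3 ≤ x) : profile x = 0 := by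
  rcases hx.eq_or_lt with rfl | hx
  · norm_num [profile]
  · rw [profile, if_neg (by linarith), if_neg (by linarith)]

theorem profileDeriv_of_mem_Icc {x : ℝ} (hx : x ∈ Icc (1/3 : ℝ) (2/3)) :
    profileDeriv x = (x - 2/3) ^ 3 / 36 := by
  rcases hx.1.eq_or_lt with rfl | h
  · norm_num [profileDeriv]
  · rw [profileDeriv, if_neg (not_le.2 h), if_pos hx.2]

theorem profileDeriv_of_two_thirds_le {x : ℝ} (hx : 2/3 ≤ x) : profileDeriv x = 0 := by
  unfold profileDeriv
  split_ifs with h₁ h₂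
  · linarith
  · rw [le_antisymm h₂ hx]; norm_num
  · rfl

theorem profile_pos {x : ℝ} (h₀ : 0 ≤ x) (h₁ : x < 2/3) : 0 < profile x := by
  rcases le_or_gt x (1/3) with hx | hx
  · rw [profile_of_le_one_third hx]
    nlinarith [pow_le_pow_left₀ h₀ hx 4]
  · rw [profile_of_mem_Icc ⟨hx.le, h₁.le⟩]
    have : x - 2/3 ≠ 0 := by linarith
    positivity

theorem profile_nonneg {x : ℝ} (hx : 0 ≤ x) : 0 ≤ profile x := by
  rcases lt_or_ge x (2/3) with h | h
  · exact (profile_pos hx h).le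
  · exact (profile_of_two_thirds_le h).ge

theorem hasDerivAt_profile (x : ℝ) : HasDerivAt profile (profileDeriv x) x := by
  have hleft : HasDerivAt (fun y : ℝ => (1/144) * (2/81 - y ^ 4)) (-(x ^ 3) / 36) x := by
    refine (((hasDerivAt_pow 4 x).const_sub _).const_mul _).congr_deriv ?_
    ring
  have hmid : HasDerivAt (fun y : ℝ => (1/144) * (y - 2/3) ^ 4) ((x - 2/3) ^ 3 / 36) x := by
    refine ((((hasDerivAt_id x).sub_const _).pow 4).const_mul _).congr_deriv ?_
    simp only [id]
    ring
  unfold profile profileDeriv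
  apply hasDerivAt_ite_le (by norm_num) (by norm_num) fun _ => hleft
  intro _
  apply hasDerivAt_ite_le (by norm_num) (by norm_num) (fun _ => hmid)
  exact fun _ => hasDerivAt_const x (0 : ℝ)

theorem lipschitzOnWith_profileDeriv :
    LipschitzOnWith (1/108) profileDeriv (Icc (-1/3) 1) := by
  have hbound : ∀ {d : ℝ}, |d| ≤ 1/3 → ‖d ^ 2 / 12‖₊ ≤ (1/108 : ℝ≥0) := fun {d} hd => by
    rw [← NNReal.coe_le_coe, coe_nnnorm, Real.norm_eq_abs, abs_of_nonneg (by positivity)]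
    have := sq_le_sq' (abs_le.1 hd).1 (abs_le.1 hd).2
    norm_num at this ⊢
    linarith
  have hleft : LipschitzOnWith (1/108) profileDeriv (Icc (-1/3) (1/3)) := by
    refine (convex_Icc _ _).lipschitzOnWith_of_nnnorm_hasDerivWithin_le
      (f' := fun x => -(x ^ 2 / 12)) (fun x hx => ?_) fun x hx => by
        rw [nnnorm_neg]
        exact hbound (abs_le.2 ⟨by linarith [hx.1], hx.2⟩)
    refine HasDerivWithinAt.congr ?_ (fun y hy => if_pos hy.2) (if_pos hx.2)
    exact (((hasDerivAt_pow 3 x).neg.div_const 36).congr_deriv (by ring)).hasDerivWithinAt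
  have hmid : LipschitzOnWith (1/108) profileDeriv (Icc (1/3) (2/3)) := by
    refine (convex_Icc _ _).lipschitzOnWith_of_nnnorm_hasDerivWithin_le
      (f' := fun x => (x - 2/3) ^ 2 / 12) (fun x hx => ?_)
      fun x hx => hbound (abs_le.2 ⟨by linarith [hx.1], by linarith [hx.2]⟩)
    refine HasDerivWithinAt.congr ?_ (fun y hy => profileDeriv_of_mem_Icc hy)
      (profileDeriv_of_mem_Icc hx)
    exact (hasDerivAt_cube_sub_two_thirds_div x).hasDerivWithinAt
  have hright : LipschitzOnWith (1/108) profileDeriv (Icc (2/3) 1) :=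
    LipschitzOnWith.of_dist_le_mul fun x hx y hy => by
      rw [profileDeriv_of_two_thirds_le hx.1, profileDeriv_of_two_thirds_le hy.1, dist_self]
      positivity
  exact hleft.Icc_union_Icc (hmid.Icc_union_Icc hright)

theorem hasDerivAt_profileDeriv_of_one_third_lt {x : ℝ} (hx : 1/3 < x) :
    HasDerivAt profileDeriv (if x ≤ 2/3 then (x - 2/3) ^ 2 / 12 else 0) x := by
  have h : HasDerivAt (fun y : ℝ => if y ≤ 2/3 then (y - 2/3) ^ 3 / 36 else 0)
      (if x ≤ 2/3 then (x - 2/3) ^ 2 / 12 else 0) x := by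
    apply hasDerivAt_ite_le (by norm_num) (by norm_num)
      (fun _ => hasDerivAt_cube_sub_two_thirds_div x)
    exact fun _ => hasDerivAt_const x (0 : ℝ)
  exact h.congr_of_eventuallyEq
    (eventually_of_mem (Ioi_mem_nhds hx) fun y hy => if_neg (not_le.2 hy))

theorem abs_deriv_flux_le {x d : ℝ} (h : HasDerivAt profileDeriv d x) : |deriv flux x| ≤ |d| :=
  abs_deriv_divSqrtOneAddSq_comp_le h

theorem deriv_flux_of_two_thirds_le {x : ℝ} (hx : 2/3 ≤ x) : deriv flux x = 0 := by
  have h := abs_deriv_flux_le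
    (hasDerivAt_profileDeriv_of_one_third_lt (show 1/3 < x by linarith))
  rcases hx.eq_or_lt with rfl | hx
  · simpa using h
  · simpa [if_neg (not_le.2 hx)] using h

/-- On `[0, 1/3]` the bound comes from the Lipschitz constant of `profileDeriv`, which also
covers the corner `1/3`, where `flux` is not differentiable and `deriv flux` is the junk
value `0`. -/
theorem abs_deriv_flux_le_sqrt_profile {x : ℝ} (h₀ : 0 ≤ x) (h₁ : x < 2/3) :
    |deriv flux x| ≤ √(profile x) := by
  rcases le_or_gt x (1/3) with hx | hx
  · have hlip : LipschitzOnWith (1 * (1/108)) flux (Icc (-1/3) 1) :=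
      lipschitzWith_divSqrtOneAddSq.comp_lipschitzOnWith lipschitzOnWith_profileDeriv
    calc |deriv flux x| ≤ 1/108 := by
          simpa using
            norm_deriv_le_of_lipschitzOn (Icc_mem_nhds (by linarith) (by linarith)) hlip
      _ ≤ √(profile x) := by
          rw [profile_of_le_one_third hx, Real.le_sqrt' (by norm_num)]
          nlinarith [pow_le_pow_left₀ h₀ hx 4]
  · calc |deriv flux x| ≤ |(x - 2/3) ^ 2 / 12| := by
          simpa [if_pos h₁.le] using
            abs_deriv_flux_le (hasDerivAt_profileDeriv_of_one_third_lt hx)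
      _ = √(profile x) := by
          rw [profile_of_mem_Icc ⟨hx.le, h₁.le⟩, ← Real.sqrt_sq_eq_abs]
          ring_nf

theorem deriv_flux_eq_coefficient_mul (A : ℝ) {x : ℝ} (hx : 0 ≤ x) :
    deriv flux x = coefficient A x * √(profile x) := by
  rcases lt_or_ge x (2/3) with h | h
  · rw [coefficient, if_pos h, div_mul_cancel₀ _ (Real.sqrt_pos.2 (profile_pos hx h)).ne']
  · rw [deriv_flux_of_two_thirds_le h, profile_of_two_thirds_le h, Real.sqrt_zero, mul_zero]

theorem abs_coefficient_le (A : ℝ) {x : ℝ} (hx : 0 ≤ x) : |coefficient A x| ≤ max |A| 1 := by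
  unfold coefficient
  split_ifs with h
  · rw [abs_div, abs_of_nonneg (Real.sqrt_nonneg _)]
    exact (div_le_one (Real.sqrt_pos.2 (profile_pos hx h))).2
      (abs_deriv_flux_le_sqrt_profile hx h) |>.trans (le_max_right _ _)
  · exact le_max_left _ _

end DeadCore

end

theorem stmt19 (A : ℝ) :
    let u : ℝ → ℝ := fun x =>
      if x ≤ 1/3 then (1/144) * (2/81 - x ^ 4)
      else if x ≤ 2/3 then (1/144) * (x - 2/3) ^ 4
      else 0
    let u' : ℝ → ℝ := fun x =>
      if x ≤ 1/3 then -(x ^ 3) / 36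
      else if x ≤ 2/3 then (x - 2/3) ^ 3 / 36
      else 0
    let g : ℝ → ℝ := fun x => u' x / Real.sqrt (1 + (u' x) ^ 2)
    let a : ℝ → ℝ := fun x => if x < 2/3 then deriv g x / Real.sqrt (u x) else A
    (∀ x ∈ Icc (0:ℝ) 1, 0 ≤ u x) ∧
    u' 0 = 0 ∧ u' 1 = 0 ∧
    (∀ x ∈ Icc (0:ℝ) 1, HasDerivAt u (u' x) x) ∧
    (∃ C : NNReal, LipschitzOnWith C u' (Icc 0 1)) ∧
    (∀ᵐ x ∂(volume.restrict (Ioo (0:ℝ) 1)),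
      -(deriv g x) = -(a x * Real.sqrt (u x))) ∧
    (∃ C, ∀ x ∈ Icc (0:ℝ) 1, |a x| ≤ C) := by
  intro u u' g a
  refine ⟨fun x hx => DeadCore.profile_nonneg hx.1, by norm_num [u'], by norm_num [u'],
    fun x _ => DeadCore.hasDerivAt_profile x,
    ⟨1/108, DeadCore.lipschitzOnWith_profileDeriv.mono (Icc_subset_Icc (by norm_num) le_rfl)⟩,
    ae_restrict_of_forall_mem measurableSet_Ioo fun x hx =>
      congrArg Neg.neg (DeadCore.deriv_flux_eq_coefficient_mul A hx.1.le),
    ⟨max |A| 1, fun x hx => DeadCore.abs_coefficient_le A hx.1⟩⟩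
end
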